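/- arXiv:2010.02464 — 16 statements merged into one kernel-verified Lean document; each statement's English description precedes it below -/
import Mathlib

section
/- For any vectors x, y, z in a complex Hilbert space H, |⟨x,z⟩⟨z,y⟩| ≤ (1/2)[|⟨x,z⟩⟨y,z⟩| + |⟨x,y⟩|‖z‖² + |⟨x,y⟩‖z‖² − ⟨x,z⟩⟨z,y⟩|]. -/
open scoped InnerProductSpace

theorem buzano_refinement_first {H : Type*} [NormedAddCommGroup H]
    [InnerProductSpace ℂ H] [CompleteSpace H] (x y z : H) :
    ‖⟪x, z⟫_ℂ * ⟪z, y⟫_ℂ‖ ≤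
      (1 / 2) * (‖⟪x, z⟫_ℂ * ⟪y, z⟫_ℂ‖ + ‖⟪x, y⟫_ℂ‖ * ‖z‖ ^ 2 +
        ‖⟪x, y⟫_ℂ * (‖z‖ : ℂ) ^ 2 - ⟪x, z⟫_ℂ * ⟪z, y⟫_ℂ‖) := by
  have h1 : ‖⟪x, z⟫_ℂ * ⟪y, z⟫_ℂ‖ = ‖⟪x, z⟫_ℂ * ⟪z, y⟫_ℂ‖ := by
    rw [norm_mul, norm_mul, ← inner_conj_symm z y, RCLike.norm_conj]
  have h2 : ‖⟪x, y⟫_ℂ * (‖z‖ : ℂ) ^ 2‖ = ‖⟪x, y⟫_ℂ‖ * ‖z‖ ^ 2 := by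
    rw [norm_mul]
    norm_num
  have h3 : ‖⟪x, z⟫_ℂ * ⟪z, y⟫_ℂ‖ - ‖⟪x, y⟫_ℂ * (‖z‖ : ℂ) ^ 2‖ ≤
      ‖⟪x, y⟫_ℂ * (‖z‖ : ℂ) ^ 2 - ⟪x, z⟫_ℂ * ⟪z, y⟫_ℂ‖ := by
    rw [norm_sub_rev]
    exact norm_sub_norm_le _ _
  linarith
end

section
/- For any vectors x, y, z in a complex Hilbert space H, |⟨x,y⟩‖z‖² − ⟨x,z⟩⟨z,y⟩| ≤ √(‖x‖²‖z‖² − |⟨x,z⟩|²) · √(‖y‖²‖z‖² − |⟨y,z⟩|²). -/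
/-! Multiplying `x` and `y` by `‖z‖²` and subtracting their components along `z` gives vectors
`u, v` orthogonal to `z` with `⟪u, v⟫ = ‖z‖² (⟪x, y⟫ ‖z‖² - ⟪x, z⟫ ⟪z, y⟫)`,
`‖u‖ = ‖z‖ √(‖x‖² ‖z‖² - |⟪x, z⟫|²)` and likewise for `v`; the inequality is Cauchy–Schwarz
for `u, v` divided by `‖z‖²`. -/

open scoped InnerProductSpace

namespace InnerProductSpace

variable {𝕜 E : Type*} [RCLike 𝕜] [NormedAddCommGroup E] [InnerProductSpace 𝕜 E]

variable (𝕜) in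
noncomputable def scaledOrthogonalPart (z a : E) : E :=
  ((‖z‖ : 𝕜) ^ 2) • a - ⟪z, a⟫_𝕜 • z

theorem inner_scaledOrthogonalPart (z a b : E) :
    ⟪scaledOrthogonalPart 𝕜 z a, scaledOrthogonalPart 𝕜 z b⟫_𝕜 =
      (‖z‖ : 𝕜) ^ 2 * (⟪a, b⟫_𝕜 * (‖z‖ : 𝕜) ^ 2 - ⟪a, z⟫_𝕜 * ⟪z, b⟫_𝕜) := by
  have hzz : ⟪z, z⟫_𝕜 = (‖z‖ : 𝕜) ^ 2 := inner_self_eq_norm_sq_to_K z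
  simp only [scaledOrthogonalPart, inner_sub_left, inner_sub_right, inner_smul_left,
    inner_smul_right, hzz, map_pow, RCLike.conj_ofReal, inner_conj_symm]
  ring

theorem norm_sq_scaledOrthogonalPart (z a : E) :
    ‖scaledOrthogonalPart 𝕜 z a‖ ^ 2 =
      ‖z‖ ^ 2 * (‖a‖ ^ 2 * ‖z‖ ^ 2 - ‖⟪a, z⟫_𝕜‖ ^ 2) := by
  have h := inner_scaledOrthogonalPart (𝕜 := 𝕜) z a a
  rw [inner_self_eq_norm_sq_to_K, inner_self_eq_norm_sq_to_K, ← inner_conj_symm z a,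
    RCLike.mul_conj] at h
  exact_mod_cast h

theorem norm_scaledOrthogonalPart (z a : E) :
    ‖scaledOrthogonalPart 𝕜 z a‖ =
      ‖z‖ * √(‖a‖ ^ 2 * ‖z‖ ^ 2 - ‖⟪a, z⟫_𝕜‖ ^ 2) := by
  rw [← Real.sqrt_sq (norm_nonneg _), norm_sq_scaledOrthogonalPart,
    Real.sqrt_mul (sq_nonneg _), Real.sqrt_sq (norm_nonneg z)]

end InnerProductSpace

open InnerProductSpace in
theorem cs_type_refinement_general {H : Type*} [NormedAddCommGroup H]
    [InnerProductSpace ℂ H] (x y z : H) :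
    ‖⟪x, y⟫_ℂ * (‖z‖ : ℂ) ^ 2 - ⟪x, z⟫_ℂ * ⟪z, y⟫_ℂ‖ ≤
      Real.sqrt (‖x‖ ^ 2 * ‖z‖ ^ 2 - ‖⟪x, z⟫_ℂ‖ ^ 2) *
        Real.sqrt (‖y‖ ^ 2 * ‖z‖ ^ 2 - ‖⟪y, z⟫_ℂ‖ ^ 2) := by
  rcases eq_or_ne z 0 with rfl | hz
  · simp
  have hz2 : 0 < ‖z‖ ^ 2 := by positivity
  refine le_of_mul_le_mul_left ?_ hz2
  calc ‖z‖ ^ 2 * ‖⟪x, y⟫_ℂ * (‖z‖ : ℂ) ^ 2 - ⟪x, z⟫_ℂ * ⟪z, y⟫_ℂ‖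
      = ‖⟪scaledOrthogonalPart ℂ z x, scaledOrthogonalPart ℂ z y⟫_ℂ‖ := by
        rw [inner_scaledOrthogonalPart, norm_mul, norm_pow, RCLike.norm_ofReal, abs_norm]
        rfl -- `RCLike.ofReal` vs `Complex.ofReal`
    _ ≤ ‖scaledOrthogonalPart ℂ z x‖ * ‖scaledOrthogonalPart ℂ z y‖ :=
        norm_inner_le_norm _ _
    _ = ‖z‖ ^ 2 * (Real.sqrt (‖x‖ ^ 2 * ‖z‖ ^ 2 - ‖⟪x, z⟫_ℂ‖ ^ 2) *
          Real.sqrt (‖y‖ ^ 2 * ‖z‖ ^ 2 - ‖⟪y, z⟫_ℂ‖ ^ 2)) := by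
        rw [norm_scaledOrthogonalPart, norm_scaledOrthogonalPart]
        ring

theorem cs_type_refinement {H : Type*} [NormedAddCommGroup H]
    [InnerProductSpace ℂ H] [CompleteSpace H] (x y z : H) :
    ‖⟪x, y⟫_ℂ * (‖z‖ : ℂ) ^ 2 - ⟪x, z⟫_ℂ * ⟪z, y⟫_ℂ‖ ≤
      Real.sqrt (‖x‖ ^ 2 * ‖z‖ ^ 2 - ‖⟪x, z⟫_ℂ‖ ^ 2) *
        Real.sqrt (‖y‖ ^ 2 * ‖z‖ ^ 2 - ‖⟪y, z⟫_ℂ‖ ^ 2) :=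
  cs_type_refinement_general x y z
end

section
/- For any vectors x, y, z in a complex Hilbert space H, |⟨x,z⟩⟨z,y⟩| ≤ (1/2)[|⟨x,z⟩⟨y,z⟩| + |⟨x,y⟩|‖z‖² + √(‖x‖²‖z‖² − |⟨x,z⟩|²)·√(‖y‖²‖z‖² − |⟨y,z⟩|²)] ≤ (‖z‖²/2)(‖x‖‖y‖ + |⟨x,y⟩|). -/
open scoped InnerProductSpace

lemma key {H : Type*} [NormedAddCommGroup H] [InnerProductSpace ℂ H] (x y z : H) :
    ‖((‖z‖ ^ 2 : ℝ) : ℂ) * ⟪x, y⟫_ℂ - ⟪x, z⟫_ℂ * ⟪z, y⟫_ℂ‖ ≤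
      Real.sqrt (‖x‖ ^ 2 * ‖z‖ ^ 2 - ‖⟪x, z⟫_ℂ‖ ^ 2) *
        Real.sqrt (‖y‖ ^ 2 * ‖z‖ ^ 2 - ‖⟪y, z⟫_ℂ‖ ^ 2) := by
  rcases eq_or_ne z 0 with rfl | hz
  · simp
  set u : ℝ := ‖z‖ ^ 2 with hu
  have hu0 : 0 < u := pow_pos (norm_pos_iff.mpr hz) 2
  have hzz : ⟪z, z⟫_ℂ = (u : ℂ) := by
    rw [inner_self_eq_norm_sq_to_K]; norm_cast
  have hinner : ∀ a b : H, ⟪(u : ℂ) • a - ⟪z, a⟫_ℂ • z, (u : ℂ) • b - ⟪z, b⟫_ℂ • z⟫_ℂ =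
      (u : ℂ) * ((u : ℂ) * ⟪a, b⟫_ℂ - ⟪a, z⟫_ℂ * ⟪z, b⟫_ℂ) := by
    intro a b
    simp only [inner_sub_left, inner_sub_right, inner_smul_left, inner_smul_right,
      Complex.conj_ofReal, hzz, ← inner_conj_symm z a]
    ring_nf
  have hnorm : ∀ a : H, ‖(u : ℂ) • a - ⟪z, a⟫_ℂ • z‖ =
      Real.sqrt (u * (‖a‖ ^ 2 * u - ‖⟪a, z⟫_ℂ‖ ^ 2)) := by
    intro a
    have h2 : ‖(u : ℂ) • a - ⟪z, a⟫_ℂ • z‖ ^ 2 = u * (‖a‖ ^ 2 * u - ‖⟪a, z⟫_ℂ‖ ^ 2) := by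
      have h3 := inner_self_eq_norm_sq (𝕜 := ℂ) ((u : ℂ) • a - ⟪z, a⟫_ℂ • z)
      rw [hinner a a] at h3
      rw [← h3, inner_self_eq_norm_sq_to_K, ← inner_conj_symm a z, RCLike.conj_mul]
      rw [RCLike.norm_conj]
      simp [← Complex.ofReal_pow]
      exact Or.inl (mul_comm _ _)
    rw [← h2, Real.sqrt_sq (norm_nonneg _)]
  have hcs := norm_inner_le_norm (𝕜 := ℂ) ((u : ℂ) • x - ⟪z, x⟫_ℂ • z) ((u : ℂ) • y - ⟪z, y⟫_ℂ • z)
  rw [hinner x y, hnorm x, hnorm y, norm_mul, Complex.norm_real,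
    Real.norm_of_nonneg hu0.le] at hcs
  have hx2 : 0 ≤ ‖x‖ ^ 2 * u - ‖⟪x, z⟫_ℂ‖ ^ 2 := by
    have := norm_inner_le_norm (𝕜 := ℂ) x z
    nlinarith [norm_nonneg (⟪x, z⟫_ℂ), norm_nonneg x, norm_nonneg z]
  have hy2 : 0 ≤ ‖y‖ ^ 2 * u - ‖⟪y, z⟫_ℂ‖ ^ 2 := by
    have := norm_inner_le_norm (𝕜 := ℂ) y z
    nlinarith [norm_nonneg (⟪y, z⟫_ℂ), norm_nonneg y, norm_nonneg z]
  rw [Real.sqrt_mul hu0.le, Real.sqrt_mul hu0.le,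
    show Real.sqrt u * Real.sqrt (‖x‖ ^ 2 * u - ‖⟪x, z⟫_ℂ‖ ^ 2) *
      (Real.sqrt u * Real.sqrt (‖y‖ ^ 2 * u - ‖⟪y, z⟫_ℂ‖ ^ 2)) =
      (Real.sqrt u * Real.sqrt u) * (Real.sqrt (‖x‖ ^ 2 * u - ‖⟪x, z⟫_ℂ‖ ^ 2) *
        Real.sqrt (‖y‖ ^ 2 * u - ‖⟪y, z⟫_ℂ‖ ^ 2)) from by ring,
    Real.mul_self_sqrt hu0.le] at hcs
  have := le_of_mul_le_mul_left (by linarith [hcs] : u * ‖(u : ℂ) * ⟪x, y⟫_ℂ - ⟪x, z⟫_ℂ * ⟪z, y⟫_ℂ‖ ≤ u * (Real.sqrt (‖x‖ ^ 2 * u - ‖⟪x, z⟫_ℂ‖ ^ 2) * Real.sqrt (‖y‖ ^ 2 * u - ‖⟪y, z⟫_ℂ‖ ^ 2))) hu0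
  exact this
lemma sqrt_aux (a b c d : ℝ) (ha : 0 ≤ a) (hb : 0 ≤ b) (hc : 0 ≤ c) (hd : 0 ≤ d) :
    Real.sqrt a * Real.sqrt b + Real.sqrt c * Real.sqrt d ≤
      Real.sqrt (a + c) * Real.sqrt (b + d) := by
  have h1 : (Real.sqrt a * Real.sqrt b + Real.sqrt c * Real.sqrt d) ^ 2 ≤
      (Real.sqrt (a + c) * Real.sqrt (b + d)) ^ 2 := by
    have e1 := Real.sq_sqrt ha
    have e2 := Real.sq_sqrt hb
    have e3 := Real.sq_sqrt hc
    have e4 := Real.sq_sqrt hd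
    have e5 := Real.sq_sqrt (by linarith : (0:ℝ) ≤ a + c)
    have e6 := Real.sq_sqrt (by linarith : (0:ℝ) ≤ b + d)
    nlinarith [sq_nonneg (Real.sqrt a * Real.sqrt d - Real.sqrt c * Real.sqrt b),
      Real.sqrt_nonneg a, Real.sqrt_nonneg b, Real.sqrt_nonneg c, Real.sqrt_nonneg d]
  have hL : 0 ≤ Real.sqrt a * Real.sqrt b + Real.sqrt c * Real.sqrt d := by positivity
  have hR : 0 ≤ Real.sqrt (a + c) * Real.sqrt (b + d) := by positivity
  calc Real.sqrt a * Real.sqrt b + Real.sqrt c * Real.sqrt d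
      = Real.sqrt ((Real.sqrt a * Real.sqrt b + Real.sqrt c * Real.sqrt d) ^ 2) :=
        (Real.sqrt_sq hL).symm
    _ ≤ Real.sqrt ((Real.sqrt (a + c) * Real.sqrt (b + d)) ^ 2) := Real.sqrt_le_sqrt h1
    _ = Real.sqrt (a + c) * Real.sqrt (b + d) := Real.sqrt_sq hR

theorem buzano_refinement_chain {H : Type*} [NormedAddCommGroup H]
    [InnerProductSpace ℂ H] [CompleteSpace H] (x y z : H) :
    ‖⟪x, z⟫_ℂ * ⟪z, y⟫_ℂ‖ ≤
      (1 / 2) * (‖⟪x, z⟫_ℂ * ⟪y, z⟫_ℂ‖ + ‖⟪x, y⟫_ℂ‖ * ‖z‖ ^ 2 +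
        Real.sqrt (‖x‖ ^ 2 * ‖z‖ ^ 2 - ‖⟪x, z⟫_ℂ‖ ^ 2) *
          Real.sqrt (‖y‖ ^ 2 * ‖z‖ ^ 2 - ‖⟪y, z⟫_ℂ‖ ^ 2)) ∧
    (1 / 2) * (‖⟪x, z⟫_ℂ * ⟪y, z⟫_ℂ‖ + ‖⟪x, y⟫_ℂ‖ * ‖z‖ ^ 2 +
        Real.sqrt (‖x‖ ^ 2 * ‖z‖ ^ 2 - ‖⟪x, z⟫_ℂ‖ ^ 2) *
          Real.sqrt (‖y‖ ^ 2 * ‖z‖ ^ 2 - ‖⟪y, z⟫_ℂ‖ ^ 2)) ≤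
      (‖z‖ ^ 2 / 2) * (‖x‖ * ‖y‖ + ‖⟪x, y⟫_ℂ‖) := by
  have hAA : ‖⟪x, z⟫_ℂ * ⟪z, y⟫_ℂ‖ = ‖⟪x, z⟫_ℂ * ⟪y, z⟫_ℂ‖ := by
    rw [norm_mul, norm_mul, norm_inner_symm z y]
  have hkey := key x y z
  have htri : ‖⟪x, z⟫_ℂ * ⟪z, y⟫_ℂ‖ ≤ ‖((‖z‖ ^ 2 : ℝ) : ℂ) * ⟪x, y⟫_ℂ‖ +
      ‖((‖z‖ ^ 2 : ℝ) : ℂ) * ⟪x, y⟫_ℂ - ⟪x, z⟫_ℂ * ⟪z, y⟫_ℂ‖ := by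
    have := norm_sub_le (((‖z‖ ^ 2 : ℝ) : ℂ) * ⟪x, y⟫_ℂ)
      (((‖z‖ ^ 2 : ℝ) : ℂ) * ⟪x, y⟫_ℂ - ⟪x, z⟫_ℂ * ⟪z, y⟫_ℂ)
    simpa using this
  have hB : ‖((‖z‖ ^ 2 : ℝ) : ℂ) * ⟪x, y⟫_ℂ‖ = ‖⟪x, y⟫_ℂ‖ * ‖z‖ ^ 2 := by
    rw [norm_mul, Complex.norm_real, Real.norm_of_nonneg (by positivity)]
    ring
  have habc : ‖⟪x, z⟫_ℂ * ⟪z, y⟫_ℂ‖ ≤ ‖⟪x, y⟫_ℂ‖ * ‖z‖ ^ 2 +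
      Real.sqrt (‖x‖ ^ 2 * ‖z‖ ^ 2 - ‖⟪x, z⟫_ℂ‖ ^ 2) *
        Real.sqrt (‖y‖ ^ 2 * ‖z‖ ^ 2 - ‖⟪y, z⟫_ℂ‖ ^ 2) := by
    calc ‖⟪x, z⟫_ℂ * ⟪z, y⟫_ℂ‖ ≤ _ := htri
      _ ≤ _ := by rw [hB]; linarith [hkey]
  constructor
  · rw [hAA] at habc ⊢
    linarith
  · -- second inequality
    have hx2 : 0 ≤ ‖x‖ ^ 2 * ‖z‖ ^ 2 - ‖⟪x, z⟫_ℂ‖ ^ 2 := by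
      have := norm_inner_le_norm (𝕜 := ℂ) x z
      nlinarith [norm_nonneg (⟪x, z⟫_ℂ), norm_nonneg x, norm_nonneg z]
    have hy2 : 0 ≤ ‖y‖ ^ 2 * ‖z‖ ^ 2 - ‖⟪y, z⟫_ℂ‖ ^ 2 := by
      have := norm_inner_le_norm (𝕜 := ℂ) y z
      nlinarith [norm_nonneg (⟪y, z⟫_ℂ), norm_nonneg y, norm_nonneg z]
    have hs := sqrt_aux (‖⟪x, z⟫_ℂ‖ ^ 2) (‖⟪y, z⟫_ℂ‖ ^ 2)
      (‖x‖ ^ 2 * ‖z‖ ^ 2 - ‖⟪x, z⟫_ℂ‖ ^ 2) (‖y‖ ^ 2 * ‖z‖ ^ 2 - ‖⟪y, z⟫_ℂ‖ ^ 2)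
      (by positivity) (by positivity) hx2 hy2
    rw [Real.sqrt_sq (norm_nonneg _), Real.sqrt_sq (norm_nonneg _)] at hs
    have h1 : ‖⟪x, z⟫_ℂ‖ ^ 2 + (‖x‖ ^ 2 * ‖z‖ ^ 2 - ‖⟪x, z⟫_ℂ‖ ^ 2) = ‖x‖ ^ 2 * ‖z‖ ^ 2 := by
      ring
    have h2 : ‖⟪y, z⟫_ℂ‖ ^ 2 + (‖y‖ ^ 2 * ‖z‖ ^ 2 - ‖⟪y, z⟫_ℂ‖ ^ 2) = ‖y‖ ^ 2 * ‖z‖ ^ 2 := by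
      ring
    have e1 : Real.sqrt (‖x‖ ^ 2 * ‖z‖ ^ 2) = ‖x‖ * ‖z‖ := by
      rw [show ‖x‖ ^ 2 * ‖z‖ ^ 2 = (‖x‖ * ‖z‖) ^ 2 from by ring,
        Real.sqrt_sq (by positivity)]
    have e2 : Real.sqrt (‖y‖ ^ 2 * ‖z‖ ^ 2) = ‖y‖ * ‖z‖ := by
      rw [show ‖y‖ ^ 2 * ‖z‖ ^ 2 = (‖y‖ * ‖z‖) ^ 2 from by ring,
        Real.sqrt_sq (by positivity)]
    rw [h1, h2, e1, e2] at hs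
    have hA' : ‖⟪x, z⟫_ℂ * ⟪y, z⟫_ℂ‖ = ‖⟪x, z⟫_ℂ‖ * ‖⟪y, z⟫_ℂ‖ := norm_mul _ _
    nlinarith [hs, hA']
end

section
/- Buzano's inequality: for any vectors x, y, z in a complex Hilbert space H, |⟨x,z⟩|·|⟨y,z⟩| ≤ (‖z‖²/2)(|⟨x,y⟩| + ‖x‖‖y‖). -/
open scoped InnerProductSpace

theorem buzano_inequality {H : Type*} [NormedAddCommGroup H]
    [InnerProductSpace ℂ H] [CompleteSpace H] (x y z : H) :
    ‖⟪x, z⟫_ℂ‖ * ‖⟪y, z⟫_ℂ‖ ≤ (‖z‖ ^ 2 / 2) * (‖⟪x, y⟫_ℂ‖ + ‖x‖ * ‖y‖) := by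
  set w : H := (2 * ⟪z, x⟫_ℂ) • z - ((‖z‖ : ℂ) ^ 2) • x with hw
  have hre : (⟪x, z⟫_ℂ).re = (⟪z, x⟫_ℂ).re := by
    simpa using inner_re_symm (𝕜 := ℂ) x z
  have him : (⟪x, z⟫_ℂ).im = -(⟪z, x⟫_ℂ).im := by
    simpa using inner_im_symm (𝕜 := ℂ) x z
  have key : ⟪w, w⟫_ℂ = (((‖z‖ : ℂ) ^ 2 * ‖x‖) : ℂ) ^ 2 := by
    simp only [hw, inner_sub_left, inner_sub_right, inner_smul_left, inner_smul_right,
      map_mul, map_ofNat, map_pow, Complex.conj_ofReal]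
    rw [inner_self_eq_norm_sq_to_K (𝕜 := ℂ) z, inner_self_eq_norm_sq_to_K (𝕜 := ℂ) x]
    simp [Complex.ext_iff, ← Complex.ofReal_pow]
    constructor <;> (norm_cast; rw [hre, him]; ring)
  have hnw : ‖w‖ ^ 2 = (‖z‖ ^ 2 * ‖x‖) ^ 2 := by
    have h := inner_self_eq_norm_sq (𝕜 := ℂ) w
    rw [key] at h
    rw [← h]
    norm_cast
  have hnw' : ‖w‖ = ‖z‖ ^ 2 * ‖x‖ := by
    have h1 : (0:ℝ) ≤ ‖z‖ ^ 2 * ‖x‖ := by positivity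
    nlinarith [norm_nonneg w]
  have hkey : ⟪w, y⟫_ℂ = 2 * ⟪x, z⟫_ℂ * ⟪z, y⟫_ℂ - (‖z‖ : ℂ) ^ 2 * ⟪x, y⟫_ℂ := by
    simp only [hw, inner_sub_left, inner_smul_left, map_mul, map_ofNat, map_pow,
      Complex.conj_ofReal]
    rw [← inner_conj_symm x z]
  have hca : ‖⟪w, y⟫_ℂ‖ ≤ ‖z‖ ^ 2 * ‖x‖ * ‖y‖ := by
    calc ‖⟪w, y⟫_ℂ‖ ≤ ‖w‖ * ‖y‖ := norm_inner_le_norm w y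
    _ = ‖z‖ ^ 2 * ‖x‖ * ‖y‖ := by rw [hnw']
  have htri : ‖2 * ⟪x, z⟫_ℂ * ⟪z, y⟫_ℂ‖ ≤ ‖⟪w, y⟫_ℂ‖ + ‖(‖z‖ : ℂ) ^ 2 * ⟪x, y⟫_ℂ‖ := by
    calc ‖2 * ⟪x, z⟫_ℂ * ⟪z, y⟫_ℂ‖
        = ‖⟪w, y⟫_ℂ + (‖z‖ : ℂ) ^ 2 * ⟪x, y⟫_ℂ‖ := by rw [hkey]; ring_nf
      _ ≤ ‖⟪w, y⟫_ℂ‖ + ‖(‖z‖ : ℂ) ^ 2 * ⟪x, y⟫_ℂ‖ := norm_add_le _ _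
  have h2 : ‖2 * ⟪x, z⟫_ℂ * ⟪z, y⟫_ℂ‖ = 2 * (‖⟪x, z⟫_ℂ‖ * ‖⟪y, z⟫_ℂ‖) := by
    rw [norm_mul, norm_mul, ← inner_conj_symm y z, RCLike.norm_conj]
    norm_num
    ring
  have h3 : ‖(‖z‖ : ℂ) ^ 2 * ⟪x, y⟫_ℂ‖ = ‖z‖ ^ 2 * ‖⟪x, y⟫_ℂ‖ := by
    rw [norm_mul]
    simp
  rw [h2, h3] at htri
  nlinarith [htri, hca]
end

section
/- For any orthogonal projection P on a complex Hilbert space H and any vectors x, y ∈ H, |⟨Px, y⟩| ≤ (1/2)(|⟨x,y⟩| + ‖x‖‖y‖). -/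
/-!
The reflection `u = 2P - 1` of an orthogonal projection is unitary, hence an isometry, and
`P = (1 + u) / 2`. So `2 ⟪P x, y⟫ = ⟪x, y⟫ + ⟪u x, y⟫`, and Cauchy–Schwarz bounds the second term
by `‖u x‖ ‖y‖ = ‖x‖ ‖y‖`.
-/

open scoped InnerProductSpace

section

variable {𝕜 E : Type*} [RCLike 𝕜] [NormedAddCommGroup E] [InnerProductSpace 𝕜 E]

theorem ContinuousLinearMap.inner_apply_eq_half_add_inner_two_mul_sub_one (p : E →L[𝕜] E)
    (x y : E) : ⟪p x, y⟫_𝕜 = 2⁻¹ * (⟪x, y⟫_𝕜 + ⟪(2 * p - 1) x, y⟫_𝕜) := by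
  have hu_apply : (2 * p - 1) x = (2 : 𝕜) • p x - x := by
    simp [two_mul, two_smul]
  rw [hu_apply, inner_sub_left, inner_smul_left, map_ofNat]
  ring

theorem IsStarProjection.norm_inner_apply_le [CompleteSpace E] {p : E →L[𝕜] E}
    (hp : IsStarProjection p) (x y : E) :
    ‖⟪p x, y⟫_𝕜‖ ≤ 2⁻¹ * (‖⟪x, y⟫_𝕜‖ + ‖x‖ * ‖y‖) := by
  have hu := hp.two_mul_sub_one_mem_unitary
  rw [p.inner_apply_eq_half_add_inner_two_mul_sub_one, norm_mul, norm_inv, RCLike.norm_ofNat]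
  gcongr
  calc ‖⟪x, y⟫_𝕜 + ⟪(2 * p - 1) x, y⟫_𝕜‖
      ≤ ‖⟪x, y⟫_𝕜‖ + ‖(2 * p - 1) x‖ * ‖y‖ := norm_add_le_of_le le_rfl (norm_inner_le_norm _ _)
    _ = ‖⟪x, y⟫_𝕜‖ + ‖x‖ * ‖y‖ := by rw [ContinuousLinearMap.norm_map_of_mem_unitary hu]

end

theorem projection_buzano {H : Type*} [NormedAddCommGroup H]
    [InnerProductSpace ℂ H] [CompleteSpace H] (P : H →L[ℂ] H)
    (hP : P * P = P) (hP' : ContinuousLinearMap.adjoint P = P) (x y : H) :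
    ‖⟪P x, y⟫_ℂ‖ ≤ (1 / 2) * (‖⟪x, y⟫_ℂ‖ + ‖x‖ * ‖y‖) := by
  have hproj : IsStarProjection P :=
    ⟨hP, by rw [IsSelfAdjoint, ContinuousLinearMap.star_eq_adjoint, hP']⟩
  simpa only [one_div] using hproj.norm_inner_apply_le x y
end

section
/- Refined Cauchy-Schwarz: for any vectors x, y, z in a complex Hilbert space H, |⟨x,y⟩|‖z‖² ≤ |⟨x,z⟩|·|⟨z,y⟩| + √(‖x‖²‖z‖² − |⟨x,z⟩|²)·√(‖y‖²‖z‖² − |⟨y,z⟩|²) ≤ ‖z‖²‖x‖‖y‖. -/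
/-!
Write `x = αz + x'` and `y = βz + y'` with `x', y' ⊥ z`. Then
`‖z‖²⟪x, y⟫ = ‖z‖²⟪x', y'⟫ + ⟪x, z⟫⟪z, y⟫` and `‖z‖²‖x'‖² = ‖x‖²‖z‖² - |⟪x, z⟫|²`, so the first
inequality is the triangle inequality followed by Cauchy–Schwarz for `x', y'`. The second one is
Cauchy–Schwarz in `ℝ²` for the vectors `(|⟪x, z⟫|, ‖z‖‖x'‖)` and `(|⟪y, z⟫|, ‖z‖‖y'‖)`, whose
norms are `‖x‖‖z‖` and `‖y‖‖z‖`.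
-/

open scoped InnerProductSpace

lemma mul_add_sqrt_mul_sqrt_le {p q a b : ℝ} (hp : 0 ≤ p) (hq : 0 ≤ q) (hpa : p ≤ a)
    (hqb : q ≤ b) : p * q + √(a ^ 2 - p ^ 2) * √(b ^ 2 - q ^ 2) ≤ a * b := by
  have hs := Real.sq_sqrt (sub_nonneg.2 (pow_le_pow_left₀ hp hpa 2))
  have ht := Real.sq_sqrt (sub_nonneg.2 (pow_le_pow_left₀ hq hqb 2))
  refine le_of_pow_le_pow_left₀ two_ne_zero (mul_nonneg (hp.trans hpa) (hq.trans hqb)) ?_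
  nlinarith [sq_nonneg (p * √(b ^ 2 - q ^ 2) - √(a ^ 2 - p ^ 2) * q)]

section Rejection

variable {𝕜 E : Type*} [RCLike 𝕜] [NormedAddCommGroup E] [InnerProductSpace 𝕜 E]

local notation "⟪" x ", " y "⟫" => inner 𝕜 x y

variable (𝕜) in
/-- `‖z‖²` times the component of `x` orthogonal to `z`; the scaling avoids dividing by `‖z‖²`. -/
noncomputable def scaledRejection (z x : E) : E :=
  ((‖z‖ : 𝕜) ^ 2) • x - ⟪z, x⟫ • z

lemma inner_scaledRejection_left (z x : E) : ⟪scaledRejection 𝕜 z x, z⟫ = 0 := by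
  simp only [scaledRejection, inner_sub_left, inner_smul_left, inner_self_eq_norm_sq_to_K,
    inner_conj_symm, map_pow, RCLike.conj_ofReal]
  ring

lemma inner_scaledRejection_scaledRejection (z x y : E) :
    ⟪scaledRejection 𝕜 z x, scaledRejection 𝕜 z y⟫ =
      (‖z‖ : 𝕜) ^ 2 * ((‖z‖ : 𝕜) ^ 2 * ⟪x, y⟫ - ⟪x, z⟫ * ⟪z, y⟫) := by
  conv_lhs => arg 3; rw [scaledRejection]
  rw [inner_sub_right, inner_smul_right, inner_smul_right, inner_scaledRejection_left, mul_zero,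
    sub_zero, scaledRejection, inner_sub_left, inner_smul_left, inner_smul_left, inner_conj_symm]
  simp only [map_pow, RCLike.conj_ofReal]

lemma norm_scaledRejection (z x : E) :
    ‖scaledRejection 𝕜 z x‖ = ‖z‖ * √(‖x‖ ^ 2 * ‖z‖ ^ 2 - ‖⟪x, z⟫‖ ^ 2) := by
  have h : ((‖scaledRejection 𝕜 z x‖ ^ 2 : ℝ) : 𝕜) =
      (‖z‖ ^ 2 * (‖x‖ ^ 2 * ‖z‖ ^ 2 - ‖⟪x, z⟫‖ ^ 2) : ℝ) := by
    rw [RCLike.ofReal_pow, ← inner_self_eq_norm_sq_to_K, inner_scaledRejection_scaledRejection,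
      inner_self_eq_norm_sq_to_K, ← inner_conj_symm z x, RCLike.mul_conj]
    push_cast
    ring
  rw [← Real.sqrt_sq (norm_nonneg _), RCLike.ofReal_inj.1 h, Real.sqrt_mul (sq_nonneg _),
    Real.sqrt_sq (norm_nonneg _)]

lemma norm_sq_mul_inner_sub_inner_mul_inner_le (x y z : E) :
    ‖(‖z‖ : 𝕜) ^ 2 * ⟪x, y⟫ - ⟪x, z⟫ * ⟪z, y⟫‖ ≤
      √(‖x‖ ^ 2 * ‖z‖ ^ 2 - ‖⟪x, z⟫‖ ^ 2) * √(‖y‖ ^ 2 * ‖z‖ ^ 2 - ‖⟪y, z⟫‖ ^ 2) := by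
  rcases eq_or_ne z 0 with rfl | hz
  · simp
  refine le_of_mul_le_mul_left ?_ (pow_pos (norm_pos_iff.2 hz) 2)
  calc ‖z‖ ^ 2 * ‖(‖z‖ : 𝕜) ^ 2 * ⟪x, y⟫ - ⟪x, z⟫ * ⟪z, y⟫‖
      = ‖⟪scaledRejection 𝕜 z x, scaledRejection 𝕜 z y⟫‖ := by
        rw [inner_scaledRejection_scaledRejection, norm_mul, norm_pow, RCLike.norm_ofReal, abs_norm]
    _ ≤ ‖scaledRejection 𝕜 z x‖ * ‖scaledRejection 𝕜 z y‖ := norm_inner_le_norm _ _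
    _ = _ := by rw [norm_scaledRejection, norm_scaledRejection]; ring

lemma norm_inner_mul_norm_sq_le (x y z : E) :
    ‖⟪x, y⟫‖ * ‖z‖ ^ 2 ≤ ‖⟪x, z⟫‖ * ‖⟪z, y⟫‖ +
      √(‖x‖ ^ 2 * ‖z‖ ^ 2 - ‖⟪x, z⟫‖ ^ 2) * √(‖y‖ ^ 2 * ‖z‖ ^ 2 - ‖⟪y, z⟫‖ ^ 2) := by
  calc ‖⟪x, y⟫‖ * ‖z‖ ^ 2
      = ‖((‖z‖ : 𝕜) ^ 2 * ⟪x, y⟫ - ⟪x, z⟫ * ⟪z, y⟫) + ⟪x, z⟫ * ⟪z, y⟫‖ := by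
        rw [sub_add_cancel, norm_mul, norm_pow, RCLike.norm_ofReal, abs_norm, mul_comm]
    _ ≤ ‖(‖z‖ : 𝕜) ^ 2 * ⟪x, y⟫ - ⟪x, z⟫ * ⟪z, y⟫‖ + ‖⟪x, z⟫ * ⟪z, y⟫‖ := norm_add_le _ _
    _ ≤ _ := by
        rw [norm_mul, add_comm]; gcongr; exact norm_sq_mul_inner_sub_inner_mul_inner_le x y z

lemma norm_inner_mul_norm_inner_add_sqrt_mul_sqrt_le (x y z : E) :
    ‖⟪x, z⟫‖ * ‖⟪z, y⟫‖ +
      √(‖x‖ ^ 2 * ‖z‖ ^ 2 - ‖⟪x, z⟫‖ ^ 2) * √(‖y‖ ^ 2 * ‖z‖ ^ 2 - ‖⟪y, z⟫‖ ^ 2) ≤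
      ‖z‖ ^ 2 * ‖x‖ * ‖y‖ := by
  rw [norm_inner_symm z y]
  calc _ ≤ ‖x‖ * ‖z‖ * (‖y‖ * ‖z‖) := by
        simpa only [mul_pow] using mul_add_sqrt_mul_sqrt_le (norm_nonneg _) (norm_nonneg _)
          (norm_inner_le_norm (𝕜 := 𝕜) x z) (norm_inner_le_norm (𝕜 := 𝕜) y z)
    _ = _ := by ring

end Rejection

theorem refined_cauchy_schwarz_general {H : Type*} [NormedAddCommGroup H]
    [InnerProductSpace ℂ H] (x y z : H) :
    ‖⟪x, y⟫_ℂ‖ * ‖z‖ ^ 2 ≤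
      ‖⟪x, z⟫_ℂ‖ * ‖⟪z, y⟫_ℂ‖ +
        Real.sqrt (‖x‖ ^ 2 * ‖z‖ ^ 2 - ‖⟪x, z⟫_ℂ‖ ^ 2) *
          Real.sqrt (‖y‖ ^ 2 * ‖z‖ ^ 2 - ‖⟪y, z⟫_ℂ‖ ^ 2) ∧
    ‖⟪x, z⟫_ℂ‖ * ‖⟪z, y⟫_ℂ‖ +
        Real.sqrt (‖x‖ ^ 2 * ‖z‖ ^ 2 - ‖⟪x, z⟫_ℂ‖ ^ 2) *
          Real.sqrt (‖y‖ ^ 2 * ‖z‖ ^ 2 - ‖⟪y, z⟫_ℂ‖ ^ 2) ≤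
      ‖z‖ ^ 2 * ‖x‖ * ‖y‖ :=
  ⟨norm_inner_mul_norm_sq_le x y z, norm_inner_mul_norm_inner_add_sqrt_mul_sqrt_le x y z⟩

theorem refined_cauchy_schwarz {H : Type*} [NormedAddCommGroup H]
    [InnerProductSpace ℂ H] [CompleteSpace H] (x y z : H) :
    ‖⟪x, y⟫_ℂ‖ * ‖z‖ ^ 2 ≤
      ‖⟪x, z⟫_ℂ‖ * ‖⟪z, y⟫_ℂ‖ +
        Real.sqrt (‖x‖ ^ 2 * ‖z‖ ^ 2 - ‖⟪x, z⟫_ℂ‖ ^ 2) *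
          Real.sqrt (‖y‖ ^ 2 * ‖z‖ ^ 2 - ‖⟪y, z⟫_ℂ‖ ^ 2) ∧
    ‖⟪x, z⟫_ℂ‖ * ‖⟪z, y⟫_ℂ‖ +
        Real.sqrt (‖x‖ ^ 2 * ‖z‖ ^ 2 - ‖⟪x, z⟫_ℂ‖ ^ 2) *
          Real.sqrt (‖y‖ ^ 2 * ‖z‖ ^ 2 - ‖⟪y, z⟫_ℂ‖ ^ 2) ≤
      ‖z‖ ^ 2 * ‖x‖ * ‖y‖ :=
  refined_cauchy_schwarz_general x y z
end

section
/- For any unit vector e and any vectors x, y in a complex Hilbert space H, |⟨x,y⟩| ≤ |⟨x,e⟩|·|⟨e,y⟩| + √(‖x‖² − |⟨x,e⟩|²)·√(‖y‖² − |⟨y,e⟩|²) ≤ ‖x‖‖y‖. -/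
open scoped InnerProductSpace

/- Split `x = ⟪e, x⟫ e + x'` and `y = ⟪e, y⟫ e + y'` with `x', y' ⟂ e`. Then
`⟪x, y⟫ = ⟪x, e⟫⟪e, y⟫ + ⟪x', y'⟫`, and the square roots are `‖x'‖` and `‖y'‖` by Pythagoras;
Cauchy–Schwarz for `⟪x', y'⟫` gives the first inequality, and Cauchy–Schwarz in `ℝ²` for the
vectors `(‖⟪x, e⟫‖, ‖x'‖)` and `(‖⟪e, y⟫‖, ‖y'‖)`, of lengths `‖x‖` and `‖y‖`, gives the second. -/

theorem mul_add_mul_le_mul_of_sq_eq {a b c d p q : ℝ} (hp : 0 ≤ p) (hq : 0 ≤ q)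
    (hp2 : p ^ 2 = a ^ 2 + c ^ 2) (hq2 : q ^ 2 = b ^ 2 + d ^ 2) : a * b + c * d ≤ p * q := by
  have hsq : (a * b + c * d) ^ 2 ≤ (p * q) ^ 2 := by
    rw [mul_pow, hp2, hq2]
    nlinarith [sq_nonneg (a * d - b * c)]
  exact (abs_le_of_sq_le_sq' hsq (mul_nonneg hp hq)).2

section UnitVector

variable {𝕜 E : Type*} [RCLike 𝕜] [NormedAddCommGroup E] [InnerProductSpace 𝕜 E]
  {e : E}

theorem inner_sub_smul_unit (he : ‖e‖ = 1) (x y : E) :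
    ⟪x - ⟪e, x⟫_𝕜 • e, y - ⟪e, y⟫_𝕜 • e⟫_𝕜 = ⟪x, y⟫_𝕜 - ⟪x, e⟫_𝕜 * ⟪e, y⟫_𝕜 := by
  have hee : ⟪e, e⟫_𝕜 = 1 := by simp [inner_self_eq_norm_sq_to_K, he]
  simp only [inner_sub_left, inner_sub_right, inner_smul_left, inner_smul_right, hee,
    inner_conj_symm]
  ring

theorem norm_sq_eq_norm_inner_sq_add_norm_sub_smul_sq (he : ‖e‖ = 1) (x : E) :
    ‖x‖ ^ 2 = ‖⟪e, x⟫_𝕜‖ ^ 2 + ‖x - ⟪e, x⟫_𝕜 • e‖ ^ 2 := by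
  have h := inner_sub_smul_unit (𝕜 := 𝕜) he x x
  rw [inner_self_eq_norm_sq_to_K, inner_self_eq_norm_sq_to_K, ← inner_conj_symm x e,
    RCLike.conj_mul] at h
  have h' : ‖x - ⟪e, x⟫_𝕜 • e‖ ^ 2 = ‖x‖ ^ 2 - ‖⟪e, x⟫_𝕜‖ ^ 2 := by exact_mod_cast h
  linarith

theorem norm_inner_le_unit (he : ‖e‖ = 1) (x y : E) :
    ‖⟪x, y⟫_𝕜‖ ≤ ‖⟪x, e⟫_𝕜‖ * ‖⟪e, y⟫_𝕜‖ + ‖x - ⟪e, x⟫_𝕜 • e‖ * ‖y - ⟪e, y⟫_𝕜 • e‖ := by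
  have hsplit : ⟪x, y⟫_𝕜 = ⟪x, e⟫_𝕜 * ⟪e, y⟫_𝕜 + ⟪x - ⟪e, x⟫_𝕜 • e, y - ⟪e, y⟫_𝕜 • e⟫_𝕜 := by
    rw [inner_sub_smul_unit he]; ring
  calc ‖⟪x, y⟫_𝕜‖
      ≤ ‖⟪x, e⟫_𝕜 * ⟪e, y⟫_𝕜‖ + ‖⟪x - ⟪e, x⟫_𝕜 • e, y - ⟪e, y⟫_𝕜 • e⟫_𝕜‖ :=
        hsplit ▸ norm_add_le _ _
    _ ≤ _ := by rw [norm_mul]; gcongr; exact norm_inner_le_norm _ _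

theorem sqrt_norm_sq_sub_norm_inner_sq (he : ‖e‖ = 1) (x : E) :
    √(‖x‖ ^ 2 - ‖⟪x, e⟫_𝕜‖ ^ 2) = ‖x - ⟪e, x⟫_𝕜 • e‖ := by
  rw [norm_sq_eq_norm_inner_sq_add_norm_sub_smul_sq (𝕜 := 𝕜) he x, norm_inner_symm e x,
    add_sub_cancel_left, Real.sqrt_sq (norm_nonneg _)]

end UnitVector

theorem refined_cauchy_schwarz_unit_general {H : Type*} [NormedAddCommGroup H]
    [InnerProductSpace ℂ H] (e : H) (he : ‖e‖ = 1) (x y : H) :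
    ‖⟪x, y⟫_ℂ‖ ≤
      ‖⟪x, e⟫_ℂ‖ * ‖⟪e, y⟫_ℂ‖ +
        Real.sqrt (‖x‖ ^ 2 - ‖⟪x, e⟫_ℂ‖ ^ 2) *
          Real.sqrt (‖y‖ ^ 2 - ‖⟪y, e⟫_ℂ‖ ^ 2) ∧
    ‖⟪x, e⟫_ℂ‖ * ‖⟪e, y⟫_ℂ‖ +
        Real.sqrt (‖x‖ ^ 2 - ‖⟪x, e⟫_ℂ‖ ^ 2) *
          Real.sqrt (‖y‖ ^ 2 - ‖⟪y, e⟫_ℂ‖ ^ 2) ≤ ‖x‖ * ‖y‖ := by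
  rw [sqrt_norm_sq_sub_norm_inner_sq he, sqrt_norm_sq_sub_norm_inner_sq he]
  refine ⟨norm_inner_le_unit he x y, mul_add_mul_le_mul_of_sq_eq (norm_nonneg x) (norm_nonneg y)
    ?_ (norm_sq_eq_norm_inner_sq_add_norm_sub_smul_sq he y)⟩
  rw [norm_sq_eq_norm_inner_sq_add_norm_sub_smul_sq (𝕜 := ℂ) he x, norm_inner_symm e x]

theorem refined_cauchy_schwarz_unit {H : Type*} [NormedAddCommGroup H]
    [InnerProductSpace ℂ H] [CompleteSpace H] (e : H) (he : ‖e‖ = 1) (x y : H) :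
    ‖⟪x, y⟫_ℂ‖ ≤
      ‖⟪x, e⟫_ℂ‖ * ‖⟪e, y⟫_ℂ‖ +
        Real.sqrt (‖x‖ ^ 2 - ‖⟪x, e⟫_ℂ‖ ^ 2) *
          Real.sqrt (‖y‖ ^ 2 - ‖⟪y, e⟫_ℂ‖ ^ 2) ∧
    ‖⟪x, e⟫_ℂ‖ * ‖⟪e, y⟫_ℂ‖ +
        Real.sqrt (‖x‖ ^ 2 - ‖⟪x, e⟫_ℂ‖ ^ 2) *
          Real.sqrt (‖y‖ ^ 2 - ‖⟪y, e⟫_ℂ‖ ^ 2) ≤ ‖x‖ * ‖y‖ :=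
  refined_cauchy_schwarz_unit_general e he x y
end

section
/- Let A be a bounded self-adjoint operator on a complex Hilbert space H with 0 ≤ A ≤ 2I. Then for all x, y ∈ H, |⟨x − Ax, y − Ay⟩| ≤ ‖x‖‖y‖ − √(⟨(2A − A²)x, x⟩·⟨(2A − A²)y, y⟩). -/
/-!
With `B = 1 - A` one has `2A - A² = 1 - B²`, so `⟪(2A - A²)z, z⟫ = ‖z‖² - ‖Bz‖²` and the claim reads
`|⟪Bx, By⟫| + √((‖x‖² - ‖Bx‖²)(‖y‖² - ‖By‖²)) ≤ ‖x‖‖y‖`. This is Cauchy–Schwarz for `⟪Bx, By⟫`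
followed by Cauchy–Schwarz in `ℝ²` for the vectors `(‖Bx‖, √(‖x‖² - ‖Bx‖²))` and
`(‖By‖, √(‖y‖² - ‖By‖²))`, which is legitimate because `0 ≤ A ≤ 2` forces `2A - A² ≥ 0`.
-/

open scoped InnerProductSpace ComplexOrder

theorem mul_add_sqrt_mul_sub_sq_le {a b X Y : ℝ} (hX : 0 ≤ X) (hY : 0 ≤ Y)
    (ha : a ^ 2 ≤ X ^ 2) (hb : b ^ 2 ≤ Y ^ 2) :
    a * b + √((X ^ 2 - a ^ 2) * (Y ^ 2 - b ^ 2)) ≤ X * Y := by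
  have hab : a * b ≤ X * Y := by
    have := abs_le_of_sq_le_sq' ha hX
    have := abs_le_of_sq_le_sq' hb hY
    nlinarith [abs_nonneg a, abs_nonneg b, le_abs_self (a * b), abs_mul a b]
  have : √((X ^ 2 - a ^ 2) * (Y ^ 2 - b ^ 2)) ≤ X * Y - a * b :=
    Real.sqrt_le_iff.mpr ⟨by linarith, by nlinarith [sq_nonneg (X * b - a * Y)]⟩
  linarith

namespace ContinuousLinearMap

variable {𝕜 E : Type*} [RCLike 𝕜] [NormedAddCommGroup E] [InnerProductSpace 𝕜 E]

theorem IsPositive.conj_of_isSymmetric {T S : E →L[𝕜] E} (hT : T.IsPositive)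
    (hS : S.IsSymmetric) : (S * T * S).IsPositive := by
  refine ⟨fun x y => ?_, fun x => ?_⟩
  · change ⟪S (T (S x)), y⟫_𝕜 = ⟪x, S (T (S y))⟫_𝕜
    exact (hS _ _).trans ((hT.isSymmetric _ _).trans (hS _ _))
  · change 0 ≤ RCLike.re ⟪S (T (S x)), x⟫_𝕜
    exact (hS (T (S x)) x).symm ▸ hT.re_inner_nonneg_left (S x)

/-- No square root of `A` is needed: `c (cA - A²) = (c - A) A (c - A) + A (c - A) A`. -/
theorem IsPositive.smul_sub_mul_self {A : E →L[𝕜] E} {c : 𝕜} (hc : 0 < c)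
    (hA : A.IsPositive) (hcA : (c • (1 : E →L[𝕜] E) - A).IsPositive) :
    (c • A - A * A).IsPositive := by
  have key : c • A - A * A = c⁻¹ • ((c • 1 - A) * A * (c • 1 - A) + A * (c • 1 - A) * A) := by
    rw [eq_inv_smul_iff₀ hc.ne']
    simp only [sub_mul, mul_sub, smul_mul_assoc, mul_smul_comm, one_mul, mul_one, smul_sub,
      smul_smul, mul_assoc]
    abel
  rw [key]
  exact ((hA.conj_of_isSymmetric hcA.isSymmetric).add
    (hcA.conj_of_isSymmetric hA.isSymmetric)).smul_of_nonneg (inv_nonneg.mpr hc.le)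

theorem re_inner_two_smul_sub_mul_self_apply {A : E →L[𝕜] E} (hA : A.IsSymmetric) (z : E) :
    RCLike.re ⟪((2 : 𝕜) • A - A * A) z, z⟫_𝕜 = ‖z‖ ^ 2 - ‖z - A z‖ ^ 2 := by
  have hAA : ⟪(A * A) z, z⟫_𝕜 = ⟪A z, A z⟫_𝕜 := hA (A z) z
  rw [@norm_sub_sq 𝕜, sub_apply, smul_apply, inner_sub_left, inner_smul_left, hAA,
    inner_self_eq_norm_sq_to_K, map_sub, ← inner_re_symm]
  simp
  ring

end ContinuousLinearMap

open ContinuousLinearMap in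
theorem contraction_lemma_general {H : Type*} [NormedAddCommGroup H]
    [InnerProductSpace ℂ H] (A : H →L[ℂ] H)
    (hA : A.IsPositive) (hA2 : ((2 : ℂ) • (1 : H →L[ℂ] H) - A).IsPositive)
    (x y : H) :
    ‖⟪x - A x, y - A y⟫_ℂ‖ ≤
      ‖x‖ * ‖y‖ -
        Real.sqrt ((⟪((2 : ℂ) • A - A * A) x, x⟫_ℂ).re *
          (⟪((2 : ℂ) • A - A * A) y, y⟫_ℂ).re) := by
  have hre (z : H) : (⟪((2 : ℂ) • A - A * A) z, z⟫_ℂ).re = ‖z‖ ^ 2 - ‖z - A z‖ ^ 2 :=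
    re_inner_two_smul_sub_mul_self_apply hA.isSymmetric z
  have hP := hA.smul_sub_mul_self two_pos hA2
  have hx := hP.re_inner_nonneg_left x
  have hy := hP.re_inner_nonneg_left y
  rw [RCLike.re_to_complex, hre] at hx hy
  have hcs : ‖⟪x - A x, y - A y⟫_ℂ‖ ≤ ‖x - A x‖ * ‖y - A y‖ := norm_inner_le_norm _ _
  rw [hre, hre]
  linarith [mul_add_sqrt_mul_sub_sq_le (norm_nonneg x) (norm_nonneg y) (sub_nonneg.mp hx)
    (sub_nonneg.mp hy)]

theorem contraction_lemma {H : Type*} [NormedAddCommGroup H]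
    [InnerProductSpace ℂ H] [CompleteSpace H] (A : H →L[ℂ] H)
    (hA : A.IsPositive) (hA2 : ((2 : ℂ) • (1 : H →L[ℂ] H) - A).IsPositive)
    (x y : H) :
    ‖⟪x - A x, y - A y⟫_ℂ‖ ≤
      ‖x‖ * ‖y‖ -
        Real.sqrt ((⟪((2 : ℂ) • A - A * A) x, x⟫_ℂ).re *
          (⟪((2 : ℂ) • A - A * A) y, y⟫_ℂ).re) :=
  contraction_lemma_general A hA hA2 x y
end

section
/- Let A be a positive contraction on a complex Hilbert space H (0 ≤ A ≤ I). Then for all x, y ∈ H, 0 ≤ √(⟨(A − A²)x, x⟩·⟨(A − A²)y, y⟩) − |⟨(A − A²)x, y⟩| ≤ (‖x‖‖y‖ − |⟨x,y⟩|)/4. -/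
open scoped InnerProductSpace

/-!
With `B = A - A²`, positivity of `B` comes from `B = √A (1 - A) √A`, and then
`⟪B x, y⟫ = ⟪√B x, √B y⟫`, so the lower bound is Cauchy–Schwarz. For the upper bound write
`B = 1/4 - C²` with `C = A - 1/2`: then `⟪B x, x⟫ = ‖x‖²/4 - ‖C x‖²` and
`|⟪x, y⟫|/4 ≤ |⟪B x, y⟫| + ‖C x‖ ‖C y‖`, and Aczél's inequality
`√((a² - p²)(b² - q²)) ≤ ab - pq` combines the two.
-/

lemma mul_self_le_self_of_nonneg_of_le_one {A : Type*} [CStarAlgebra A] [PartialOrder A]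
    [StarOrderedRing A] {a : A} (h0 : 0 ≤ a) (h1 : a ≤ 1) : a * a ≤ a := by
  set s := CFC.sqrt a
  have hs : s * s = a := CFC.sqrt_mul_sqrt_self a h0
  have h : a - a * a = s * (1 - a) * s := by rw [← hs]; noncomm_ring
  rw [← sub_nonneg, h]
  exact conjugate_nonneg_of_nonneg (sub_nonneg.2 h1) (CFC.sqrt_nonneg a)

lemma Real.sqrt_mul_sq_sub_sq_le {a b p q : ℝ} (hp : 0 ≤ p) (hpa : p ≤ a) (hq : 0 ≤ q)
    (hqb : q ≤ b) : √((a ^ 2 - p ^ 2) * (b ^ 2 - q ^ 2)) ≤ a * b - p * q := by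
  have hpq : p * q ≤ a * b := mul_le_mul hpa hqb hq (hp.trans hpa)
  rw [Real.sqrt_le_iff]
  exact ⟨sub_nonneg.2 hpq, by nlinarith [sq_nonneg (a * q - b * p)]⟩

namespace ContinuousLinearMap

section RCLike

variable {𝕜 E : Type*} [RCLike 𝕜] [NormedAddCommGroup E] [InnerProductSpace 𝕜 E]
  {A : E →L[𝕜] E}

lemma inner_sub_mul_self_apply (hA : (A : E →ₗ[𝕜] E).IsSymmetric) (x y : E) :
    ⟪(A - A * A) x, y⟫_𝕜 =
      4⁻¹ * ⟪x, y⟫_𝕜 - ⟪A x - (2⁻¹ : 𝕜) • x, A y - (2⁻¹ : 𝕜) • y⟫_𝕜 := by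
  have hsym (u v : E) : ⟪A u, v⟫_𝕜 = ⟪u, A v⟫_𝕜 := hA u v
  simp only [sub_apply, mul_apply_eq_comp, inner_sub_left, inner_sub_right, inner_smul_left,
    inner_smul_right, map_inv₀, map_ofNat, hsym (A x) y, hsym x y]
  ring

lemma re_inner_sub_mul_self_apply_self (hA : (A : E →ₗ[𝕜] E).IsSymmetric) (x : E) :
    RCLike.re ⟪(A - A * A) x, x⟫_𝕜 = (‖x‖ / 2) ^ 2 - ‖A x - (2⁻¹ : 𝕜) • x‖ ^ 2 := by
  have h4 : (4⁻¹ : 𝕜) = ((4⁻¹ : ℝ) : 𝕜) := by rw [RCLike.ofReal_inv, RCLike.ofReal_ofNat]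
  rw [inner_sub_mul_self_apply hA, map_sub, h4, RCLike.re_ofReal_mul, inner_self_eq_norm_sq,
    inner_self_eq_norm_sq]
  ring

lemma norm_apply_sub_half_smul_le (hA : (A : E →ₗ[𝕜] E).IsSymmetric)
    (hB : (A - A * A).IsPositive) (x : E) : ‖A x - (2⁻¹ : 𝕜) • x‖ ≤ ‖x‖ / 2 := by
  have h := hB.re_inner_nonneg_left x
  rw [re_inner_sub_mul_self_apply_self hA, sub_nonneg] at h
  exact (pow_le_pow_iff_left₀ (norm_nonneg _) (by positivity) two_ne_zero).1 h

lemma norm_inner_le_norm_inner_sub_mul_self_add (hA : (A : E →ₗ[𝕜] E).IsSymmetric) (x y : E) :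
    ‖⟪x, y⟫_𝕜‖ / 4 ≤ ‖⟪(A - A * A) x, y⟫_𝕜‖ + ‖A x - (2⁻¹ : 𝕜) • x‖ * ‖A y - (2⁻¹ : 𝕜) • y‖ :=
  calc ‖⟪x, y⟫_𝕜‖ / 4
      = ‖⟪(A - A * A) x, y⟫_𝕜 + ⟪A x - (2⁻¹ : 𝕜) • x, A y - (2⁻¹ : 𝕜) • y⟫_𝕜‖ := by
        rw [inner_sub_mul_self_apply hA, sub_add_cancel, norm_mul, norm_inv, RCLike.norm_ofNat]
        ring
    _ ≤ _ := (norm_add_le _ _).trans (add_le_add le_rfl (norm_inner_le_norm _ _))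

end RCLike

variable {H : Type*} [NormedAddCommGroup H] [InnerProductSpace ℂ H] [CompleteSpace H]

lemma IsPositive.norm_inner_le_sqrt_mul {T : H →L[ℂ] H} (hT : T.IsPositive) (x y : H) :
    ‖⟪T x, y⟫_ℂ‖ ≤ √((⟪T x, x⟫_ℂ).re * (⟪T y, y⟫_ℂ).re) := by
  set S := CFC.sqrt T
  have hS : IsSelfAdjoint S := .of_nonneg (CFC.sqrt_nonneg T)
  have h (u v : H) : ⟪T u, v⟫_ℂ = ⟪S u, S v⟫_ℂ := by
    rw [← CFC.sqrt_mul_sqrt_self T ((nonneg_iff_isPositive T).2 hT), mul_apply_eq_comp]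
    exact hS.isSymmetric _ _
  rw [h, h, h, ← RCLike.re_to_complex, ← RCLike.re_to_complex, inner_self_eq_norm_sq,
    inner_self_eq_norm_sq, ← mul_pow, Real.sqrt_sq (by positivity)]
  exact norm_inner_le_norm _ _

end ContinuousLinearMap

theorem contraction_refinement {H : Type*} [NormedAddCommGroup H]
    [InnerProductSpace ℂ H] [CompleteSpace H] (A : H →L[ℂ] H)
    (hA : A.IsPositive) (hA1 : ((1 : H →L[ℂ] H) - A).IsPositive) (x y : H) :
    0 ≤ Real.sqrt ((⟪(A - A * A) x, x⟫_ℂ).re * (⟪(A - A * A) y, y⟫_ℂ).re) -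
        ‖⟪(A - A * A) x, y⟫_ℂ‖ ∧
      Real.sqrt ((⟪(A - A * A) x, x⟫_ℂ).re * (⟪(A - A * A) y, y⟫_ℂ).re) -
        ‖⟪(A - A * A) x, y⟫_ℂ‖ ≤ (‖x‖ * ‖y‖ - ‖⟪x, y⟫_ℂ‖) / 4 := by
  have hB : (A - A * A).IsPositive := (ContinuousLinearMap.le_def _ _).1 <|
    mul_self_le_self_of_nonneg_of_le_one ((ContinuousLinearMap.nonneg_iff_isPositive A).2 hA)
      ((ContinuousLinearMap.le_def A 1).2 hA1)
  refine ⟨sub_nonneg.2 (hB.norm_inner_le_sqrt_mul x y), ?_⟩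
  have hsqrt := Real.sqrt_mul_sq_sub_sq_le (norm_nonneg _)
    (A.norm_apply_sub_half_smul_le hA.isSymmetric hB x) (norm_nonneg _)
    (A.norm_apply_sub_half_smul_le hA.isSymmetric hB y)
  rw [← A.re_inner_sub_mul_self_apply_self hA.isSymmetric,
    ← A.re_inner_sub_mul_self_apply_self hA.isSymmetric] at hsqrt
  have htri := A.norm_inner_le_norm_inner_sub_mul_self_add hA.isSymmetric x y
  simp only [RCLike.re_to_complex] at hsqrt
  linarith
end

section
/- Let A be a positive contraction on a complex Hilbert space H (0 ≤ A ≤ I). Then for all x, y ∈ H, |⟨x,y⟩| + √(⟨Ax,x⟩⟨Ay,y⟩) − |⟨Ax,y⟩| ≤ ‖x‖‖y‖. -/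
/-!
Write `⟪x, y⟫ = ⟪(1 - A) x, y⟫ + ⟪A x, y⟫` and apply Cauchy–Schwarz to the semi-inner product
`⟪(1 - A) ·, ·⟫`. Since `re ⟪(1 - A) z, z⟫ + re ⟪A z, z⟫ = ‖z‖ ^ 2`, the two-term Cauchy–Schwarz
inequality `√(ab) + √(cd) ≤ √((a + c)(b + d))` bounds
`√(re ⟪(1 - A) x, x⟫ re ⟪(1 - A) y, y⟫) + √(re ⟪A x, x⟫ re ⟪A y, y⟫)` by `‖x‖ ‖y‖`.
-/

open scoped InnerProductSpace
open RCLike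

namespace LinearMap.IsPositive

variable {𝕜 E : Type*} [RCLike 𝕜] [NormedAddCommGroup E] [InnerProductSpace 𝕜 E]
  {T : E →ₗ[𝕜] E}

abbrev preInnerProductSpaceCore (hT : T.IsPositive) : PreInnerProductSpace.Core 𝕜 E where
  inner x y := ⟪T x, y⟫_𝕜
  conj_inner_symm x y := by rw [inner_conj_symm, hT.isSymmetric]
  re_inner_nonneg := hT.re_inner_nonneg_left
  add_left x y z := by simp only [map_add, inner_add_left]
  smul_left x y r := by simp only [map_smul, inner_smul_left]

theorem norm_inner_le_sqrt_mul (hT : T.IsPositive) (x y : E) :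
    ‖⟪T x, y⟫_𝕜‖ ≤ √(re ⟪T x, x⟫_𝕜 * re ⟪T y, y⟫_𝕜) := by
  refine Real.le_sqrt_of_sq_le ?_
  have h := @InnerProductSpace.Core.inner_mul_inner_self_le 𝕜 E _ _ _
    hT.preInnerProductSpaceCore x y
  change ‖⟪T x, y⟫_𝕜‖ * ‖⟪T y, x⟫_𝕜‖ ≤ re ⟪T x, x⟫_𝕜 * re ⟪T y, y⟫_𝕜 at h
  rwa [hT.isSymmetric y x, norm_inner_symm y, ← sq] at h

end LinearMap.IsPositive

theorem Real.sqrt_mul_add_sqrt_mul_le {a b c d : ℝ} (ha : 0 ≤ a) (hb : 0 ≤ b) (hc : 0 ≤ c)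
    (hd : 0 ≤ d) : √(a * b) + √(c * d) ≤ √((a + c) * (b + d)) := by
  simpa [Fin.sum_univ_two, ← Real.sqrt_mul, ha, hc, add_nonneg ha hc] using
    Real.sum_sqrt_mul_sqrt_le Finset.univ (f := ![a, c]) (g := ![b, d])
      (Fin.forall_fin_two.2 ⟨ha, hc⟩) (Fin.forall_fin_two.2 ⟨hb, hd⟩)

theorem ContinuousLinearMap.one_sub_apply_add_apply {R M : Type*} [Ring R]
    [TopologicalSpace M] [AddCommGroup M] [IsTopologicalAddGroup M] [Module R M]
    (T : M →L[R] M) (x : M) : (1 - T) x + T x = x := by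
  rw [sub_apply, sub_add_cancel, one_apply_eq_self]

theorem contraction_cauchy_schwarz_refinement_general {H : Type*} [NormedAddCommGroup H]
    [InnerProductSpace ℂ H] (A : H →L[ℂ] H)
    (hA : A.IsPositive) (hA1 : ((1 : H →L[ℂ] H) - A).IsPositive) (x y : H) :
    ‖⟪x, y⟫_ℂ‖ + Real.sqrt ((⟪A x, x⟫_ℂ).re * (⟪A y, y⟫_ℂ).re) - ‖⟪A x, y⟫_ℂ‖ ≤
      ‖x‖ * ‖y‖ := by
  have hsplit : ‖⟪x, y⟫_ℂ‖ ≤ ‖⟪(1 - A) x, y⟫_ℂ‖ + ‖⟪A x, y⟫_ℂ‖ := by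
    calc ‖⟪x, y⟫_ℂ‖ = ‖⟪(1 - A) x, y⟫_ℂ + ⟪A x, y⟫_ℂ‖ := by
          rw [← inner_add_left, A.one_sub_apply_add_apply]
      _ ≤ _ := norm_add_le _ _
  have hcs : ‖⟪(1 - A) x, y⟫_ℂ‖ ≤ √((⟪(1 - A) x, x⟫_ℂ).re * (⟪(1 - A) y, y⟫_ℂ).re) :=
    hA1.toLinearMap.norm_inner_le_sqrt_mul x y
  have hsum := Real.sqrt_mul_add_sqrt_mul_le
    (hA1.re_inner_nonneg_left x) (hA1.re_inner_nonneg_left y)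
    (hA.re_inner_nonneg_left x) (hA.re_inner_nonneg_left y)
  have hnorm (z : H) : (⟪(1 - A) z, z⟫_ℂ).re + (⟪A z, z⟫_ℂ).re = ‖z‖ ^ 2 := by
    rw [← Complex.add_re, ← inner_add_left, A.one_sub_apply_add_apply]
    exact inner_self_eq_norm_sq (𝕜 := ℂ) z
  simp only [RCLike.re_to_complex] at hsum
  rw [hnorm, hnorm, ← mul_pow, Real.sqrt_sq (by positivity)] at hsum
  linarith

theorem contraction_cauchy_schwarz_refinement {H : Type*} [NormedAddCommGroup H]
    [InnerProductSpace ℂ H] [CompleteSpace H] (A : H →L[ℂ] H)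
    (hA : A.IsPositive) (hA1 : ((1 : H →L[ℂ] H) - A).IsPositive) (x y : H) :
    ‖⟪x, y⟫_ℂ‖ + Real.sqrt ((⟪A x, x⟫_ℂ).re * (⟪A y, y⟫_ℂ).re) - ‖⟪A x, y⟫_ℂ‖ ≤
      ‖x‖ * ‖y‖ :=
  contraction_cauchy_schwarz_refinement_general A hA hA1 x y
end

section
/- Let A be a positive contraction on a complex Hilbert space H (0 ≤ A ≤ I). Then for all x, y ∈ H, |⟨Ax,y⟩| ≤ (‖x‖‖y‖ + |⟨x,y⟩|)/2. -/
/-!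
Since `0 ≤ A ≤ 1`, the spectrum of `A` lies in `[0, 1]`, so `2A - 1` is a contraction.
The bound then follows from `2⟪A x, y⟫ = ⟪(2A - 1) x, y⟫ + ⟪x, y⟫` and Cauchy–Schwarz.
-/

open scoped InnerProductSpace

lemma CStarAlgebra.norm_two_smul_sub_one_le_one {A : Type*} [CStarAlgebra A] [PartialOrder A]
    [StarOrderedRing A] {a : A} (h0 : 0 ≤ a) (h1 : a ≤ 1) : ‖(2 : ℝ) • a - 1‖ ≤ 1 := by
  have hσ : ∀ t ∈ spectrum ℝ a, 0 ≤ t ∧ t ≤ 1 := fun t ht =>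
    ⟨spectrum_nonneg_of_nonneg h0 ht, (CFC.le_one_iff a).1 h1 t ht⟩
  have hcfc : (2 : ℝ) • a - 1 = cfc (fun t : ℝ => 2 * t - 1) a := by
    rw [cfc_sub .., cfc_const_mul .., cfc_id' .., cfc_const_one ..]
  rw [hcfc]
  refine norm_cfc_le zero_le_one fun t ht => ?_
  obtain ⟨ht0, ht1⟩ := hσ t ht
  rw [Real.norm_eq_abs, abs_le]
  constructor <;> linarith

lemma ContinuousLinearMap.two_mul_norm_inner_apply_le {𝕜 E : Type*} [RCLike 𝕜]
    [NormedAddCommGroup E] [InnerProductSpace 𝕜 E] (T : E →L[𝕜] E) (x y : E) :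
    2 * ‖⟪T x, y⟫_𝕜‖ ≤ ‖(2 : 𝕜) • T - 1‖ * ‖x‖ * ‖y‖ + ‖⟪x, y⟫_𝕜‖ := by
  have hsplit : (2 : 𝕜) * ⟪T x, y⟫_𝕜 = ⟪((2 : 𝕜) • T - 1) x, y⟫_𝕜 + ⟪x, y⟫_𝕜 := by
    simp [inner_sub_left, inner_smul_left, map_ofNat]
  calc 2 * ‖⟪T x, y⟫_𝕜‖ = ‖⟪((2 : 𝕜) • T - 1) x, y⟫_𝕜 + ⟪x, y⟫_𝕜‖ := by
        rw [← hsplit, norm_mul, RCLike.norm_two]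
    _ ≤ ‖((2 : 𝕜) • T - 1) x‖ * ‖y‖ + ‖⟪x, y⟫_𝕜‖ :=
        (norm_add_le _ _).trans (by gcongr; exact norm_inner_le_norm _ _)
    _ ≤ ‖(2 : 𝕜) • T - 1‖ * ‖x‖ * ‖y‖ + ‖⟪x, y⟫_𝕜‖ := by
        gcongr; exact le_opNorm _ _

theorem contraction_buzano {H : Type*} [NormedAddCommGroup H]
    [InnerProductSpace ℂ H] [CompleteSpace H] (A : H →L[ℂ] H)
    (hA : A.IsPositive) (hA1 : ((1 : H →L[ℂ] H) - A).IsPositive) (x y : H) :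
    ‖⟪A x, y⟫_ℂ‖ ≤ (‖x‖ * ‖y‖ + ‖⟪x, y⟫_ℂ‖) / 2 := by
  have h0 : 0 ≤ A := A.nonneg_iff_isPositive.mpr hA
  have h1 : A ≤ 1 := sub_nonneg.mp ((1 - A).nonneg_iff_isPositive.mpr hA1)
  have hcontr : ‖(2 : ℂ) • A - 1‖ ≤ 1 := by
    have := CStarAlgebra.norm_two_smul_sub_one_le_one h0 h1
    rwa [ofNat_smul_eq_nsmul ℝ, ← ofNat_smul_eq_nsmul ℂ] at this
  have hbound : ‖(2 : ℂ) • A - 1‖ * ‖x‖ * ‖y‖ ≤ ‖x‖ * ‖y‖ := by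
    rw [mul_assoc]
    exact mul_le_of_le_one_left (by positivity) hcontr
  linarith [A.two_mul_norm_inner_apply_le x y]
end

section
/- Let A be a positive bounded operator on a complex Hilbert space H. Then for all x, y ∈ H, |⟨Ax,y⟩| ≤ (‖A‖/2)(|⟨x,y⟩| + ‖x‖‖y‖). -/
/-!
Write `c = ‖A‖ / 2`. Since the spectrum of the positive operator `A` lies in `[0, 2c]`, the
shifted operator `A - c` has spectrum in `[-c, c]` and hence norm at most `c`. Splitting
`⟪A x, y⟫ = c ⟪x, y⟫ + ⟪(A - c) x, y⟫` and applying Cauchy–Schwarz to the second term gives the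
bound.
-/

open scoped InnerProductSpace

lemma CStarAlgebra.norm_sub_algebraMap_half_norm_le {A : Type*} [CStarAlgebra A] [PartialOrder A]
    [StarOrderedRing A] {a : A} (ha : 0 ≤ a) :
    ‖a - algebraMap ℝ A (‖a‖ / 2)‖ ≤ ‖a‖ / 2 := by
  nontriviality A
  have h_cfc : a - algebraMap ℝ A (‖a‖ / 2) = cfc (fun t : ℝ ↦ t - ‖a‖ / 2) a := by
    rw [cfc_sub (fun t : ℝ ↦ t) (fun _ : ℝ ↦ ‖a‖ / 2) a, cfc_id' ℝ a, cfc_const (‖a‖ / 2) a]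
  rw [h_cfc]
  refine norm_cfc_le (by positivity) fun t ht ↦ ?_
  have ht_nonneg : 0 ≤ t := spectrum_nonneg_of_nonneg ha ht
  have ht_le : t ≤ ‖a‖ := (Real.le_norm_self t).trans (spectrum.norm_le_norm_of_mem ht)
  rw [Real.norm_eq_abs, abs_le]
  constructor <;> linarith

lemma norm_inner_apply_le_of_norm_sub_smul_one_le {𝕜 E : Type*} [RCLike 𝕜] [NormedAddCommGroup E]
    [InnerProductSpace 𝕜 E] {T : E →L[𝕜] E} {c : ℝ} (hT : ‖T - (c : 𝕜) • 1‖ ≤ c) (x y : E) :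
    ‖⟪T x, y⟫_𝕜‖ ≤ c * (‖⟪x, y⟫_𝕜‖ + ‖x‖ * ‖y‖) := by
  have hc : 0 ≤ c := (norm_nonneg _).trans hT
  have h_split : T x = (c : 𝕜) • x + (T - (c : 𝕜) • 1) x := by simp
  calc ‖⟪T x, y⟫_𝕜‖ ≤ ‖⟪(c : 𝕜) • x, y⟫_𝕜‖ + ‖⟪(T - (c : 𝕜) • 1) x, y⟫_𝕜‖ := by
        rw [h_split, inner_add_left]
        exact norm_add_le _ _
    _ ≤ c * ‖⟪x, y⟫_𝕜‖ + ‖T - (c : 𝕜) • 1‖ * ‖x‖ * ‖y‖ := by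
        gcongr
        · rw [inner_smul_left, norm_mul, RCLike.norm_conj, RCLike.norm_ofReal, abs_of_nonneg hc]
        · exact (norm_inner_le_norm _ _).trans (by gcongr; exact ContinuousLinearMap.le_opNorm _ _)
    _ ≤ c * ‖⟪x, y⟫_𝕜‖ + c * ‖x‖ * ‖y‖ := by gcongr
    _ = c * (‖⟪x, y⟫_𝕜‖ + ‖x‖ * ‖y‖) := by ring

theorem positive_buzano {H : Type*} [NormedAddCommGroup H]
    [InnerProductSpace ℂ H] [CompleteSpace H] (A : H →L[ℂ] H)
    (hA : A.IsPositive) (x y : H) :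
    ‖⟪A x, y⟫_ℂ‖ ≤ (‖A‖ / 2) * (‖⟪x, y⟫_ℂ‖ + ‖x‖ * ‖y‖) := by
  have h_shift := CStarAlgebra.norm_sub_algebraMap_half_norm_le
    ((ContinuousLinearMap.nonneg_iff_isPositive A).mpr hA)
  rw [IsScalarTower.algebraMap_apply ℝ ℂ, Algebra.algebraMap_eq_smul_one] at h_shift
  exact norm_inner_apply_le_of_norm_sub_smul_one_le h_shift x y
end

section
/- Let A, S, T be bounded operators on a complex Hilbert space H with A a positive contraction (0 ≤ A ≤ I). Then ω(SAT) ≤ (1/4)‖ |T|² + |S*|² ‖ + (1/2)ω(ST), where |X| = (X*X)^{1/2}. -/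
/-!
Write `u = T x` and `w = S† x` for a unit vector `x`, so that `⟪S A T x, x⟫ = ⟪A u, w⟫` and
`⟪S T x, x⟫ = ⟪u, w⟫`. Since `0 ≤ A ≤ 1`, the operator `2A - 1` is a self-adjoint contraction, and
`2A = (2A - 1) + 1` gives `2 |⟪A u, w⟫| ≤ ‖u‖ ‖w‖ + |⟪u, w⟫|`. Finally
`‖u‖ ‖w‖ ≤ (‖u‖² + ‖w‖²) / 2 = ⟪(T†T + S S†) x, x⟫ / 2 ≤ ‖T†T + S S†‖ / 2`.
-/

open scoped InnerProductSpace

noncomputable def numRadius {H : Type*} [NormedAddCommGroup H]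
    [InnerProductSpace ℂ H] (T : H →L[ℂ] H) : ℝ :=
  ⨆ x : {x : H // ‖x‖ = 1}, ‖⟪T x, (x : H)⟫_ℂ‖

open ContinuousLinearMap

namespace CStarAlgebra

variable {A : Type*} [CStarAlgebra A] [PartialOrder A] [StarOrderedRing A]

lemma norm_le_one_of_mem_Icc {a : A} (h : a ∈ Set.Icc (-1) 1) : ‖a‖ ≤ 1 := by
  nontriviality A
  have ha : IsSelfAdjoint a := by
    simpa using (sub_nonneg.mpr h.1).isSelfAdjoint.sub (IsSelfAdjoint.one A)
  rcases norm_or_neg_norm_mem_spectrum ha with hs | hs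
  · exact (le_algebraMap_iff_spectrum_le (R := ℝ) ha).mp (by simpa using h.2) _ hs
  · have := (algebraMap_le_iff_le_spectrum (R := ℝ) (r := -1) ha).mp (by simpa using h.1) _ hs
    linarith

lemma norm_two_nsmul_sub_one_le_one {a : A} (h : a ∈ Set.Icc 0 1) : ‖2 • a - 1‖ ≤ 1 := by
  refine norm_le_one_of_mem_Icc ⟨?_, ?_⟩
  · rw [← sub_nonneg, sub_neg_eq_add, sub_add_cancel]
    exact nsmul_nonneg h.1 2
  · rw [← sub_nonneg, two_nsmul, show (1 : A) - (a + a - 1) = (1 - a) + (1 - a) by abel]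
    exact add_nonneg (sub_nonneg.mpr h.2) (sub_nonneg.mpr h.2)

end CStarAlgebra

section InnerProductSpace

variable {H : Type*} [NormedAddCommGroup H] [InnerProductSpace ℂ H]

lemma norm_inner_apply_self_le (T : H →L[ℂ] H) (x : H) : ‖⟪T x, x⟫_ℂ‖ ≤ ‖T‖ * ‖x‖ ^ 2 := by
  grw [norm_inner_le_norm, le_opNorm, mul_assoc, ← sq]

lemma numRadius_nonneg (T : H →L[ℂ] H) : 0 ≤ numRadius T :=
  Real.iSup_nonneg fun _ ↦ norm_nonneg _

lemma norm_inner_apply_le_numRadius (T : H →L[ℂ] H) {x : H} (hx : ‖x‖ = 1) :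
    ‖⟪T x, x⟫_ℂ‖ ≤ numRadius T :=
  le_ciSup (f := fun x : {x : H // ‖x‖ = 1} ↦ ‖⟪T x, (x : H)⟫_ℂ‖)
    ⟨‖T‖, by rintro _ ⟨y, rfl⟩; simpa [y.2] using norm_inner_apply_self_le T y⟩ ⟨x, hx⟩

variable [CompleteSpace H]

lemma two_mul_norm_inner_apply_le {A : H →L[ℂ] H} (hA : A ∈ Set.Icc 0 1) (u w : H) :
    2 * ‖⟪A u, w⟫_ℂ‖ ≤ ‖u‖ * ‖w‖ + ‖⟪u, w⟫_ℂ‖ := by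
  set B : H →L[ℂ] H := 2 • A - 1
  have hB : ‖B u‖ ≤ ‖u‖ :=
    B.le_of_opNorm_le (CStarAlgebra.norm_two_nsmul_sub_one_le_one hA) u |>.trans_eq (one_mul _)
  have key : (2 : ℂ) * ⟪A u, w⟫_ℂ = ⟪B u, w⟫_ℂ + ⟪u, w⟫_ℂ := by
    simp only [B, sub_apply, two_nsmul, add_apply, one_apply_eq_self, inner_sub_left, inner_add_left]
    ring
  calc 2 * ‖⟪A u, w⟫_ℂ‖ = ‖⟪B u, w⟫_ℂ + ⟪u, w⟫_ℂ‖ := by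
        rw [← key, norm_mul]; norm_num
    _ ≤ ‖B u‖ * ‖w‖ + ‖⟪u, w⟫_ℂ‖ := norm_add_le_of_le (norm_inner_le_norm _ _) le_rfl
    _ ≤ ‖u‖ * ‖w‖ + ‖⟪u, w⟫_ℂ‖ := by gcongr

lemma re_inner_adjoint_mul_add_mul_adjoint_apply (S T : H →L[ℂ] H) (x : H) :
    (⟪(adjoint T * T + S * adjoint S) x, x⟫_ℂ).re = ‖T x‖ ^ 2 + ‖adjoint S x‖ ^ 2 := by
  simp [adjoint_inner_left, ← adjoint_inner_right S, ← Complex.ofReal_pow]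

end InnerProductSpace

theorem numerical_radius_SAT {H : Type*} [NormedAddCommGroup H]
    [InnerProductSpace ℂ H] [CompleteSpace H] (A S T : H →L[ℂ] H)
    (hA : A.IsPositive) (hA1 : ((1 : H →L[ℂ] H) - A).IsPositive) :
    numRadius (S * A * T) ≤
      (1 / 4) * ‖ContinuousLinearMap.adjoint T * T + S * ContinuousLinearMap.adjoint S‖ +
        (1 / 2) * numRadius (S * T) := by
  have hA_mem : A ∈ Set.Icc 0 1 := ⟨(nonneg_iff_isPositive A).2 hA, (le_def _ _).2 hA1⟩
  refine Real.iSup_le (fun ⟨x, hx⟩ ↦ ?_) (by positivity [numRadius_nonneg (S * T)])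
  set u := T x
  set w := adjoint S x
  have hSAT : ⟪(S * A * T) x, x⟫_ℂ = ⟪A u, w⟫_ℂ := (adjoint_inner_right S _ x).symm
  have hST : ⟪u, w⟫_ℂ = ⟪(S * T) x, x⟫_ℂ := adjoint_inner_right S _ x
  have hN : ‖u‖ ^ 2 + ‖w‖ ^ 2 ≤ ‖adjoint T * T + S * adjoint S‖ := by
    rw [← re_inner_adjoint_mul_add_mul_adjoint_apply]
    exact (Complex.re_le_norm _).trans ((norm_inner_apply_self_le _ x).trans_eq (by simp [hx]))
  have hA_uw := two_mul_norm_inner_apply_le hA_mem u w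
  have hω := norm_inner_apply_le_numRadius (S * T) hx
  rw [hSAT]
  rw [hST] at hA_uw
  nlinarith [sq_nonneg (‖u‖ - ‖w‖)]
end

section
/- Let A, S, T be bounded operators on a complex Hilbert space H with A a positive contraction. Then the operator norm satisfies ‖SAT‖ ≤ (‖T‖‖S‖ + ‖ST‖)/2. -/
open scoped InnerProductSpace

private lemma norm_le_one_of_between {H : Type*} [NormedAddCommGroup H]
    [InnerProductSpace ℂ H] [CompleteSpace H] (B : H →L[ℂ] H)
    (hsa : IsSelfAdjoint B) (h1 : B ≤ 1) (h2 : -1 ≤ B) : ‖B‖ ≤ 1 := by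
  have h3 : ∀ x ∈ spectrum ℝ B, x ≤ 1 := by
    rw [← le_algebraMap_iff_spectrum_le (ha := hsa)]
    simpa using h1
  have h4 : ∀ x ∈ spectrum ℝ B, (-1:ℝ) ≤ x := by
    rw [← algebraMap_le_iff_le_spectrum (ha := hsa)]
    simpa using h2
  calc ‖B‖ = ‖cfc (id : ℝ → ℝ) B‖ := by rw [cfc_id ℝ B]
    _ ≤ 1 := norm_cfc_le zero_le_one fun x hx => by
        simpa [Real.norm_eq_abs, abs_le] using ⟨h4 x hx, h3 x hx⟩

theorem norm_SAT {H : Type*} [NormedAddCommGroup H]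
    [InnerProductSpace ℂ H] [CompleteSpace H] (A S T : H →L[ℂ] H)
    (hA : A.IsPositive) (hA1 : ((1 : H →L[ℂ] H) - A).IsPositive) :
    ‖S * A * T‖ ≤ (‖T‖ * ‖S‖ + ‖S * T‖) / 2 := by
  have hA' : (0 : H →L[ℂ] H) ≤ A := (ContinuousLinearMap.nonneg_iff_isPositive A).mpr hA
  have hA1' : (0 : H →L[ℂ] H) ≤ 1 - A := (ContinuousLinearMap.nonneg_iff_isPositive _).mpr hA1
  set B : H →L[ℂ] H := A + A - 1 with hBdef
  have hsa : IsSelfAdjoint B :=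
    (hA.isSelfAdjoint.add hA.isSelfAdjoint).sub (IsSelfAdjoint.one _)
  have h1 : B ≤ 1 := by
    rw [← sub_nonneg]
    have : (1 : H →L[ℂ] H) - B = (1 - A) + (1 - A) := by rw [hBdef]; abel
    rw [this]; exact add_nonneg hA1' hA1'
  have h2 : -1 ≤ B := by
    rw [← sub_nonneg]
    have : B - (-1) = A + A := by rw [hBdef]; abel
    rw [this]; exact add_nonneg hA' hA'
  have hB : ‖B‖ ≤ 1 := norm_le_one_of_between B hsa h1 h2
  have hkey : S * A * T + S * A * T = S * T + S * B * T := by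
    rw [hBdef]; noncomm_ring
  have hnorm : 2 * ‖S * A * T‖ = ‖S * T + S * B * T‖ := by
    rw [← hkey, ← two_smul ℝ (S * A * T), norm_smul]
    simp
  have hSBT : ‖S * B * T‖ ≤ ‖S‖ * ‖T‖ := by
    calc ‖S * B * T‖ ≤ ‖S * B‖ * ‖T‖ := norm_mul_le _ _
      _ ≤ ‖S‖ * ‖B‖ * ‖T‖ := by gcongr; exact norm_mul_le _ _
      _ ≤ ‖S‖ * 1 * ‖T‖ := by gcongr
      _ = ‖S‖ * ‖T‖ := by ring
  have : 2 * ‖S * A * T‖ ≤ ‖S * T‖ + ‖S‖ * ‖T‖ := by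
    rw [hnorm]
    exact (norm_add_le _ _).trans (by gcongr)
  linarith
end

section
/- For any bounded operators S, T on a complex Hilbert space H, ω(ST) ≤ (1/2)‖ |T|² + |S*|² ‖. -/
open scoped InnerProductSpace

theorem numerical_radius_ST {H : Type*} [NormedAddCommGroup H]
    [InnerProductSpace ℂ H] [CompleteSpace H] (S T : H →L[ℂ] H) :
    numRadius (S * T) ≤
      (1 / 2) * ‖ContinuousLinearMap.adjoint T * T + S * ContinuousLinearMap.adjoint S‖ := by
  have hA : ∀ x : H, ‖x‖ = 1 → ‖⟪(S * T) x, (x : H)⟫_ℂ‖ ≤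
      (1/2) * ‖ContinuousLinearMap.adjoint T * T + S * ContinuousLinearMap.adjoint S‖ := by
    intro x hx
    set A := ContinuousLinearMap.adjoint T * T + S * ContinuousLinearMap.adjoint S with hAdef
    have h1 : ⟪(S * T) x, x⟫_ℂ = ⟪T x, ContinuousLinearMap.adjoint S x⟫_ℂ := by
      simp [ContinuousLinearMap.mul_apply, ContinuousLinearMap.adjoint_inner_right]
    have h2 : ‖⟪(S*T) x, x⟫_ℂ‖ ≤ ‖T x‖ * ‖ContinuousLinearMap.adjoint S x‖ := by
      rw [h1]; exact norm_inner_le_norm _ _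
    have h3 : ‖T x‖ * ‖ContinuousLinearMap.adjoint S x‖ ≤
        (‖T x‖^2 + ‖ContinuousLinearMap.adjoint S x‖^2)/2 := by
      nlinarith [sq_nonneg (‖T x‖ - ‖ContinuousLinearMap.adjoint S x‖)]
    have h4 : ‖T x‖^2 + ‖ContinuousLinearMap.adjoint S x‖^2 = RCLike.re ⟪A x, x⟫_ℂ := by
      have e1 : ⟪(ContinuousLinearMap.adjoint T * T) x, x⟫_ℂ = ⟪T x, T x⟫_ℂ := by
        simp [ContinuousLinearMap.mul_apply, ContinuousLinearMap.adjoint_inner_left]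
      have e2 : ⟪(S * ContinuousLinearMap.adjoint S) x, x⟫_ℂ
          = ⟪ContinuousLinearMap.adjoint S x, ContinuousLinearMap.adjoint S x⟫_ℂ := by
        rw [ContinuousLinearMap.mul_apply]
        exact (ContinuousLinearMap.adjoint_inner_right S _ _).symm
      rw [hAdef]
      simp only [ContinuousLinearMap.add_apply, inner_add_left, map_add, e1, e2]
      rw [← @inner_self_eq_norm_sq ℂ, ← @inner_self_eq_norm_sq ℂ]
    have h5 : RCLike.re ⟪A x, x⟫_ℂ ≤ ‖A‖ := by
      calc RCLike.re ⟪A x, x⟫_ℂ ≤ ‖⟪A x, x⟫_ℂ‖ := RCLike.re_le_norm _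
        _ ≤ ‖A x‖ * ‖x‖ := norm_inner_le_norm _ _
        _ ≤ ‖A‖ * ‖x‖ * ‖x‖ := by gcongr; exact A.le_opNorm x
        _ = ‖A‖ := by rw [hx]; ring
    linarith
  apply Real.iSup_le
  · rintro ⟨x, hx⟩; exact hA x hx
  · positivity
end

section
/- For nonzero vectors x, y, z in ℂⁿ, defining ψ_{u,v} = arccos(|⟨u,v⟩|/(‖u‖‖v‖)) ∈ [0, π/2], one has cos(ψ_{x,z} + ψ_{z,y}) ≤ cos ψ_{x,y} + |cos ψ_{x,y} − cos ψ_{x,z}·cos ψ_{z,y}| − sin ψ_{x,z}·sin ψ_{z,y} ≤ cos ψ_{x,y}, and hence ψ_{x,y} ≤ ψ_{x,z} + ψ_{z,y}. -/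
/-!
Subtracting from `x` and `y` their components along the unit vector `ẑ = z / ‖z‖` leaves vectors
whose inner product is `⟪x, y⟫ - ⟪x, ẑ⟫ ⟪ẑ, y⟫` and whose norms are `‖x‖ sin ψ_{x,z}` and
`‖y‖ sin ψ_{z,y}`. Cauchy–Schwarz for these remainders gives
`|cos ψ_{x,y} - cos ψ_{x,z} cos ψ_{z,y}| ≤ sin ψ_{x,z} sin ψ_{z,y}`, which is the second inequality;
the first is the addition formula for `cos`, and the triangle inequality follows because `cos` is
decreasing on `[0, π]`.
-/

open scoped InnerProductSpace

noncomputable def angleCS {n : ℕ} (u v : EuclideanSpace ℂ (Fin n)) : ℝ :=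
  Real.arccos (‖⟪u, v⟫_ℂ‖ / (‖u‖ * ‖v‖))

section

variable {𝕜 E : Type*} [RCLike 𝕜] [NormedAddCommGroup E] [InnerProductSpace 𝕜 E]

theorem norm_inner_div_norm_mul_norm_le_one (x y : E) : ‖⟪x, y⟫_𝕜‖ / (‖x‖ * ‖y‖) ≤ 1 :=
  div_le_one_of_le₀ (norm_inner_le_norm x y) (by positivity)

theorem norm_smul_inv_norm_le_one (x : E) : ‖(‖x‖⁻¹ : 𝕜) • x‖ ≤ 1 := by
  rcases eq_or_ne x 0 with rfl | hx
  · simp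
  · exact (norm_smul_inv_norm hx).le

theorem norm_inner_smul_inv_norm (x y : E) :
    ‖⟪(‖x‖⁻¹ : 𝕜) • x, (‖y‖⁻¹ : 𝕜) • y⟫_𝕜‖ = ‖⟪x, y⟫_𝕜‖ / (‖x‖ * ‖y‖) := by
  rw [inner_smul_left, inner_smul_right, norm_mul, norm_mul, RCLike.norm_conj]
  simp only [norm_inv, RCLike.norm_ofReal, abs_norm]
  field_simp

theorem inner_sub_inner_smul_of_norm_eq_one {w : E} (hw : ‖w‖ = 1) (u v : E) :
    ⟪u - ⟪w, u⟫_𝕜 • w, v - ⟪w, v⟫_𝕜 • w⟫_𝕜 = ⟪u, v⟫_𝕜 - ⟪u, w⟫_𝕜 * ⟪w, v⟫_𝕜 := by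
  have hww : ⟪w, w⟫_𝕜 = 1 := by simp [inner_self_eq_norm_sq_to_K, hw]
  simp only [inner_sub_left, inner_sub_right, inner_smul_left, inner_smul_right, inner_conj_symm,
    hww]
  ring

theorem norm_sub_inner_smul_sq_of_norm_eq_one {w : E} (hw : ‖w‖ = 1) (u : E) :
    ‖u - ⟪w, u⟫_𝕜 • w‖ ^ 2 = ‖u‖ ^ 2 - ‖⟪w, u⟫_𝕜‖ ^ 2 := by
  have h := congrArg (RCLike.re (K := 𝕜)) (inner_sub_inner_smul_of_norm_eq_one hw u u)
  rwa [← inner_conj_symm (𝕜 := 𝕜) u w, RCLike.conj_mul, inner_self_eq_norm_sq (𝕜 := 𝕜), map_sub,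
    inner_self_eq_norm_sq (𝕜 := 𝕜), ← RCLike.ofReal_pow, RCLike.ofReal_re] at h

theorem abs_norm_inner_sub_le_of_norm_eq_one {w : E} (hw : ‖w‖ = 1) (u v : E) :
    |‖⟪u, v⟫_𝕜‖ - ‖⟪u, w⟫_𝕜‖ * ‖⟪w, v⟫_𝕜‖| ≤
      √(‖u‖ ^ 2 - ‖⟪u, w⟫_𝕜‖ ^ 2) * √(‖v‖ ^ 2 - ‖⟪w, v⟫_𝕜‖ ^ 2) := by
  calc |‖⟪u, v⟫_𝕜‖ - ‖⟪u, w⟫_𝕜‖ * ‖⟪w, v⟫_𝕜‖|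
      = |‖⟪u, v⟫_𝕜‖ - ‖⟪u, w⟫_𝕜 * ⟪w, v⟫_𝕜‖| := by rw [norm_mul]
    _ ≤ ‖⟪u, v⟫_𝕜 - ⟪u, w⟫_𝕜 * ⟪w, v⟫_𝕜‖ := abs_norm_sub_norm_le _ _
    _ = ‖⟪u - ⟪w, u⟫_𝕜 • w, v - ⟪w, v⟫_𝕜 • w⟫_𝕜‖ := by rw [inner_sub_inner_smul_of_norm_eq_one hw]
    _ ≤ ‖u - ⟪w, u⟫_𝕜 • w‖ * ‖v - ⟪w, v⟫_𝕜 • w‖ := norm_inner_le_norm _ _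
    _ = √(‖u‖ ^ 2 - ‖⟪u, w⟫_𝕜‖ ^ 2) * √(‖v‖ ^ 2 - ‖⟪w, v⟫_𝕜‖ ^ 2) := by
      rw [norm_inner_symm (𝕜 := 𝕜) u w, ← norm_sub_inner_smul_sq_of_norm_eq_one hw,
        ← norm_sub_inner_smul_sq_of_norm_eq_one hw, Real.sqrt_sq (norm_nonneg _),
        Real.sqrt_sq (norm_nonneg _)]

theorem abs_norm_inner_div_sub_le (x y z : E) :
    |‖⟪x, y⟫_𝕜‖ / (‖x‖ * ‖y‖) - ‖⟪x, z⟫_𝕜‖ / (‖x‖ * ‖z‖) * (‖⟪z, y⟫_𝕜‖ / (‖z‖ * ‖y‖))| ≤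
      √(1 - (‖⟪x, z⟫_𝕜‖ / (‖x‖ * ‖z‖)) ^ 2) * √(1 - (‖⟪z, y⟫_𝕜‖ / (‖z‖ * ‖y‖)) ^ 2) := by
  rcases eq_or_ne z 0 with rfl | hz
  · simp only [inner_zero_right, inner_zero_left, norm_zero, zero_div, zero_mul, sub_zero,
      ne_eq, OfNat.ofNat_ne_zero, not_false_eq_true, zero_pow, Real.sqrt_one, mul_one]
    rw [abs_of_nonneg (by positivity)]
    exact norm_inner_div_norm_mul_norm_le_one x y
  simp only [← norm_inner_smul_inv_norm (𝕜 := 𝕜)]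
  set x' : E := (‖x‖⁻¹ : 𝕜) • x
  set y' : E := (‖y‖⁻¹ : 𝕜) • y
  have hx' : ‖x'‖ ^ 2 ≤ 1 := pow_le_one₀ (norm_nonneg _) (norm_smul_inv_norm_le_one x)
  have hy' : ‖y'‖ ^ 2 ≤ 1 := pow_le_one₀ (norm_nonneg _) (norm_smul_inv_norm_le_one y)
  calc _ ≤ _ := abs_norm_inner_sub_le_of_norm_eq_one (norm_smul_inv_norm hz) x' y'
    _ ≤ _ := by gcongr

end

theorem le_of_cos_le_cos {ψ s : ℝ} (hψ : ψ ≤ Real.pi) (hs : 0 ≤ s)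
    (h : Real.cos s ≤ Real.cos ψ) : ψ ≤ s := by
  by_contra! hsψ
  exact (Real.cos_lt_cos_of_nonneg_of_le_pi hs hψ hsψ).not_ge h

theorem cos_angleCS {n : ℕ} (u v : EuclideanSpace ℂ (Fin n)) :
    Real.cos (angleCS u v) = ‖⟪u, v⟫_ℂ‖ / (‖u‖ * ‖v‖) :=
  Real.cos_arccos (by linarith [show 0 ≤ ‖⟪u, v⟫_ℂ‖ / (‖u‖ * ‖v‖) by positivity])
    (norm_inner_div_norm_mul_norm_le_one u v)

theorem sin_angleCS {n : ℕ} (u v : EuclideanSpace ℂ (Fin n)) :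
    Real.sin (angleCS u v) = √(1 - (‖⟪u, v⟫_ℂ‖ / (‖u‖ * ‖v‖)) ^ 2) :=
  Real.sin_arccos _

theorem krein_lin_triangle_general {n : ℕ} (x y z : EuclideanSpace ℂ (Fin n)) :
    (Real.cos (angleCS x z + angleCS z y) ≤
      Real.cos (angleCS x y) +
        |Real.cos (angleCS x y) - Real.cos (angleCS x z) * Real.cos (angleCS z y)| -
        Real.sin (angleCS x z) * Real.sin (angleCS z y)) ∧
    (Real.cos (angleCS x y) +
        |Real.cos (angleCS x y) - Real.cos (angleCS x z) * Real.cos (angleCS z y)| -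
        Real.sin (angleCS x z) * Real.sin (angleCS z y) ≤ Real.cos (angleCS x y)) ∧
    angleCS x y ≤ angleCS x z + angleCS z y := by
  have lower : Real.cos (angleCS x z + angleCS z y) ≤
      Real.cos (angleCS x y) +
        |Real.cos (angleCS x y) - Real.cos (angleCS x z) * Real.cos (angleCS z y)| -
        Real.sin (angleCS x z) * Real.sin (angleCS z y) := by
    rw [Real.cos_add]
    linarith [neg_abs_le (Real.cos (angleCS x y) - Real.cos (angleCS x z) * Real.cos (angleCS z y))]
  have upper : Real.cos (angleCS x y) +
        |Real.cos (angleCS x y) - Real.cos (angleCS x z) * Real.cos (angleCS z y)| -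
        Real.sin (angleCS x z) * Real.sin (angleCS z y) ≤ Real.cos (angleCS x y) := by
    have key := abs_norm_inner_div_sub_le (𝕜 := ℂ) x y z
    simp only [cos_angleCS, sin_angleCS]
    linarith
  refine ⟨lower, upper, le_of_cos_le_cos (Real.arccos_le_pi _) ?_ (lower.trans upper)⟩
  exact add_nonneg (Real.arccos_nonneg _) (Real.arccos_nonneg _)

theorem krein_lin_triangle {n : ℕ} (x y z : EuclideanSpace ℂ (Fin n))
    (hx : x ≠ 0) (hy : y ≠ 0) (hz : z ≠ 0) :
    (Real.cos (angleCS x z + angleCS z y) ≤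
      Real.cos (angleCS x y) +
        |Real.cos (angleCS x y) - Real.cos (angleCS x z) * Real.cos (angleCS z y)| -
        Real.sin (angleCS x z) * Real.sin (angleCS z y)) ∧
    (Real.cos (angleCS x y) +
        |Real.cos (angleCS x y) - Real.cos (angleCS x z) * Real.cos (angleCS z y)| -
        Real.sin (angleCS x z) * Real.sin (angleCS z y) ≤ Real.cos (angleCS x y)) ∧
    angleCS x y ≤ angleCS x z + angleCS z y :=
  krein_lin_triangle_general x y z
end
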